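/- arXiv:1901.00359 — 4 statements merged into one kernel-verified Lean document; each statement's English description precedes it below -/
import Mathlib

section
/- Let p ≥ 2 be an integer and let f : ℝ → (0,∞) be monotone non-decreasing on (-∞,0], monotone increasing on [0,∞), and differentiable on (M,∞) for some M > 0, with φ_f := f'/f on (M,∞). If κφ_f(κ) → ∞ as κ → ∞ and the map κ ↦ κφ_f(κ) is monotone non-decreasing on (M',∞) for some M' > 0, then f provides high concentration: for every ε ∈ (0,2), (∫_{1-ε}^{1} (1-s²)^{(p-3)/2} f(κs) ds) / (∫_{-1}^{1} (1-s²)^{(p-3)/2} f(κs) ds) → 1 as κ → ∞. -/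
open MeasureTheory Filter Asymptotics Real Set

/-- Logarithmic derivative `φ_f = f'/f`. -/
noncomputable def phiF (f : ℝ → ℝ) (κ : ℝ) : ℝ := deriv f κ / f κ


lemma logGrow (f : ℝ → ℝ) (hpos : ∀ x, 0 < f x) (M : ℝ)
    (hdiff : ∀ x ∈ Set.Ioi M, DifferentiableAt ℝ f x)
    (htop : Tendsto (fun κ => κ * phiF f κ) atTop atTop) (K : ℝ) :
    ∃ T : ℝ, 0 < T ∧ ∀ x y, T ≤ x → x ≤ y →
      K * (Real.log y - Real.log x) ≤ Real.log (f y) - Real.log (f x) := by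
  obtain ⟨T₀, hT₀⟩ := eventually_atTop.mp (htop.eventually_ge_atTop K)
  set T := max T₀ (max M 0) + 1 with hTdef
  have hTT₀ : T₀ ≤ T := le_trans (le_max_left _ _) (by linarith [le_refl T])
  have hTM : M < T := lt_of_le_of_lt (le_trans (le_max_left M 0) (le_max_right T₀ _)) (by linarith)
  have hTpos : 0 < T := lt_of_le_of_lt (le_trans (le_max_right M 0) (le_max_right T₀ _)) (by linarith)
  set h : ℝ → ℝ := fun x => Real.log (f x) - K * Real.log x with hh
  have key : ∀ x : ℝ, T ≤ x → HasDerivAt h (phiF f x - K * x⁻¹) x := by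
    intro x hx
    have hxM : M < x := lt_of_lt_of_le hTM hx
    have hx0 : 0 < x := lt_of_lt_of_le hTpos hx
    have hf := (hdiff x hxM).hasDerivAt
    have hlog := hf.log (hpos x).ne'
    have hlogx := (Real.hasDerivAt_log hx0.ne').const_mul K
    exact hlog.sub hlogx
  have hmono : MonotoneOn h (Set.Ici T) := by
    apply monotoneOn_of_deriv_nonneg (convex_Ici T)
    · exact fun x hx => ((key x hx).differentiableAt.continuousAt).continuousWithinAt
    · rw [interior_Ici]
      exact fun x hx => ((key x (le_of_lt hx)).differentiableAt).differentiableWithinAt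
    · rw [interior_Ici]
      intro x hx
      rw [(key x hx.le).deriv]
      have hx0 : 0 < x := lt_trans hTpos hx
      have hK : K ≤ x * phiF f x := hT₀ x (le_trans hTT₀ hx.le)
      rw [sub_nonneg]
      calc K * x⁻¹ ≤ (x * phiF f x) * x⁻¹ :=
            mul_le_mul_of_nonneg_right hK (inv_nonneg.mpr hx0.le)
        _ = phiF f x := by field_simp
  refine ⟨T, hTpos, fun x y hx hxy => ?_⟩
  have := hmono (mem_Ici.mpr hx) (mem_Ici.mpr (hx.trans hxy)) hxy
  simp only [hh] at this
  nlinarith [this]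

lemma f_atTop (f : ℝ → ℝ) (hpos : ∀ x, 0 < f x) (M : ℝ)
    (hdiff : ∀ x ∈ Set.Ioi M, DifferentiableAt ℝ f x)
    (htop : Tendsto (fun κ => κ * phiF f κ) atTop atTop) :
    Tendsto f atTop atTop := by
  obtain ⟨T, hT, hG⟩ := logGrow f hpos M hdiff htop 1
  have hlog : Tendsto (fun y => Real.log (f y)) atTop atTop := by
    apply tendsto_atTop_mono' _ _ (tendsto_atTop_add_const_right _
      (Real.log (f T) - Real.log T) Real.tendsto_log_atTop)
    filter_upwards [eventually_ge_atTop T] with y hy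
    have := hG T y le_rfl hy
    linarith
  have : Tendsto (fun y => Real.exp (Real.log (f y))) atTop atTop :=
    Real.tendsto_exp_atTop.comp hlog
  refine this.congr (fun y => Real.exp_log (hpos y))

lemma ratio_tendsto (f : ℝ → ℝ) (hpos : ∀ x, 0 < f x)
    (hmono : Monotone f) (M : ℝ)
    (hdiff : ∀ x ∈ Set.Ioi M, DifferentiableAt ℝ f x)
    (htop : Tendsto (fun κ => κ * phiF f κ) atTop atTop)
    (a b : ℝ) (hab : a < b) (hb : 0 < b) :
    Tendsto (fun κ => f (κ * a) / f (κ * b)) atTop (nhds 0) := by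
  have hfb : Tendsto (fun κ => f (κ * b)) atTop atTop :=
    (f_atTop f hpos M hdiff htop).comp (tendsto_id.atTop_mul_const hb)
  rcases le_or_gt a 0 with ha | ha
  · -- bound by f 0 / f (κ b)
    apply squeeze_zero' (g := fun κ => f 0 / f (κ * b))
    · filter_upwards with κ using le_of_lt (div_pos (hpos _) (hpos _))
    · filter_upwards [eventually_ge_atTop (0:ℝ)] with κ hκ
      have h1 : κ * a ≤ 0 := mul_nonpos_of_nonneg_of_nonpos hκ ha
      exact (div_le_div_iff_of_pos_right (hpos _)).mpr (hmono h1)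
    · exact tendsto_const_nhds.div_atTop hfb
  · -- log difference tends to -∞
    have hba : 0 < Real.log (b / a) := Real.log_pos ((one_lt_div ha).mpr hab)
    have hlogdiff : Tendsto (fun κ => Real.log (f (κ * a)) - Real.log (f (κ * b)))
        atTop atBot := by
      rw [tendsto_atBot]
      intro C
      set K : ℝ := max 1 ((-C) / Real.log (b / a)) with hK
      have hKpos : 0 < K := lt_of_lt_of_le zero_lt_one (le_max_left _ _)
      obtain ⟨T, hT, hG⟩ := logGrow f hpos M hdiff htop K
      filter_upwards [eventually_ge_atTop (T / a), eventually_gt_atTop (0:ℝ)]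
        with κ hκ hκ0
      have hκa : T ≤ κ * a := by
        rw [div_le_iff₀ ha] at hκ; linarith [hκ]
      have hκab : κ * a ≤ κ * b := by nlinarith
      have := hG (κ * a) (κ * b) hκa hκab
      have hlogeq : Real.log (κ * b) - Real.log (κ * a) = Real.log (b / a) := by
        rw [Real.log_mul hκ0.ne' hb.ne', Real.log_mul hκ0.ne' ha.ne',
          Real.log_div hb.ne' ha.ne']
        ring
      rw [hlogeq] at this
      have hKC : -C ≤ K * Real.log (b / a) := by
        have : (-C) / Real.log (b / a) ≤ K := le_max_right _ _
        calc -C = ((-C) / Real.log (b / a)) * Real.log (b / a) := by field_simp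
          _ ≤ K * Real.log (b / a) := mul_le_mul_of_nonneg_right this hba.le
      linarith
    have := Real.tendsto_exp_atBot.comp hlogdiff
    apply this.congr
    intro κ
    simp only [Function.comp_apply]
    rw [Real.exp_sub, Real.exp_log (hpos _), Real.exp_log (hpos _)]

lemma g_meas (r : ℝ) : Measurable fun s : ℝ => (1 - s^2) ^ r :=
  (measurable_const.sub (measurable_id.pow_const 2)).pow measurable_const

lemma g_int_right (r : ℝ) (hr : -1 < r) :
    IntervalIntegrable (fun s => (1 - s^2) ^ r) volume 0 1 := by
  have h1 : IntervalIntegrable (fun x : ℝ => x ^ r) volume 0 1 :=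
    intervalIntegral.intervalIntegrable_rpow' hr
  have h2 : IntervalIntegrable (fun x : ℝ => (1 - x) ^ r) volume 0 1 := by
    have := (h1.comp_sub_left 1).symm
    norm_num at this
    exact this
  have h3 : IntervalIntegrable (fun x : ℝ => max 1 ((2:ℝ)^r) * (1 - x) ^ r) volume 0 1 :=
    h2.const_mul _
  refine h3.mono_fun ((g_meas r).aestronglyMeasurable) ?_
  rw [uIoc_of_le (by norm_num : (0:ℝ) ≤ 1)]
  rw [Filter.EventuallyLE, ae_restrict_iff' measurableSet_Ioc]
  filter_upwards with s hs
  have hs0 : 0 < s := hs.1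
  have hs1 : s ≤ 1 := hs.2
  have h1s : (0:ℝ) ≤ 1 - s := by linarith
  have h1s' : (0:ℝ) ≤ 1 + s := by linarith
  have hfact : 1 - s^2 = (1-s) * (1+s) := by ring
  have hnn : (0:ℝ) ≤ (1 - s^2) ^ r := by
    rw [hfact]; exact Real.rpow_nonneg (mul_nonneg h1s h1s') r
  rw [Real.norm_eq_abs, Real.norm_eq_abs, abs_of_nonneg hnn, hfact,
    Real.mul_rpow h1s h1s', abs_of_nonneg]
  · rw [mul_comm ((1-s)^r)]
    apply mul_le_mul_of_nonneg_right _ (Real.rpow_nonneg h1s r)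
    rcases le_or_gt 0 r with h | h
    · exact le_max_of_le_right (Real.rpow_le_rpow h1s' (by linarith) h)
    · exact le_max_of_le_left (Real.rpow_le_one_of_one_le_of_nonpos (by linarith) h.le)
  · exact mul_nonneg (le_max_of_le_left zero_le_one) (Real.rpow_nonneg h1s r)

lemma g_int (r : ℝ) (hr : -1 < r) :
    IntervalIntegrable (fun s => (1 - s^2) ^ r) volume (-1) 1 := by
  have h := g_int_right r hr
  have h2 : IntervalIntegrable (fun s : ℝ => (1 - (-s)^2) ^ r) volume (-1) 0 := by
    have := ((IntervalIntegrable.iff_comp_neg (by simp)).mp h).symm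
    norm_num at this ⊢
    exact this
  have h2' : IntervalIntegrable (fun s : ℝ => (1 - s^2) ^ r) volume (-1) 0 := by
    simpa [neg_pow] using h2
  exact h2'.trans h


/-- If `κ φ_f(κ) → ∞` monotonically, then `f` provides high concentration. -/
theorem high_concentration_of_tendsto_atTop
    (p : ℕ) (hp : 2 ≤ p) (f : ℝ → ℝ)
    (hpos : ∀ x, 0 < f x)
    (hmono₁ : MonotoneOn f (Set.Iic (0:ℝ)))
    (hmono₂ : StrictMonoOn f (Set.Ici (0:ℝ)))
    (hdiff : ∃ M > (0:ℝ), ∀ x ∈ Set.Ioi M, DifferentiableAt ℝ f x)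
    (htop : Tendsto (fun κ => κ * phiF f κ) atTop atTop)
    (hmonoφ : ∃ M' > (0:ℝ), MonotoneOn (fun κ => κ * phiF f κ) (Set.Ioi M')) :
    ∀ ε : ℝ, 0 < ε → ε < 2 →
      Tendsto (fun κ =>
          (∫ s in (1 - ε)..1, (1 - s ^ 2) ^ (((p:ℝ) - 3) / 2) * f (κ * s)) /
          (∫ s in (-1:ℝ)..1, (1 - s ^ 2) ^ (((p:ℝ) - 3) / 2) * f (κ * s)))
        atTop (nhds 1) := by
  intro ε hε0 hε2
  obtain ⟨M, hM0, hdiff⟩ := hdiff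
  have hmono : Monotone f := by
    intro x y hxy
    rcases le_total y 0 with hy | hy
    · exact hmono₁ (hxy.trans hy) hy hxy
    · rcases le_total x 0 with hx | hx
      · exact (hmono₁ hx (mem_Iic.mpr le_rfl) hx).trans
          (hmono₂.monotoneOn (mem_Ici.mpr le_rfl) hy hy)
      · exact hmono₂.monotoneOn hx (hx.trans hxy) hxy
  set r : ℝ := ((p:ℝ) - 3) / 2 with hrdef
  have hr : -1 < r := by
    have : (2:ℝ) ≤ (p:ℝ) := by exact_mod_cast hp
    rw [hrdef]; linarith
  set g : ℝ → ℝ := fun s => (1 - s^2) ^ r with hgdef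
  have hgnn : ∀ s ∈ Icc (-1:ℝ) 1, 0 ≤ g s := by
    intro s hs
    exact Real.rpow_nonneg (by nlinarith [hs.1, hs.2]) r
  have hgpos : ∀ s ∈ Ioo (-1:ℝ) 1, 0 < g s := by
    intro s hs
    exact Real.rpow_pos_of_pos (by nlinarith [hs.1, hs.2]) r
  set a : ℝ := 1 - ε with hadef
  set c : ℝ := 1 - ε/2 with hcdef
  set d : ℝ := 1 - ε/4 with hddef
  have ha1 : -1 < a := by rw [hadef]; linarith
  have hac : a < c := by rw [hadef, hcdef]; linarith
  have hc0 : 0 < c := by rw [hcdef]; linarith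
  have hcd : c < d := by rw [hcdef, hddef]; linarith
  have hd1 : d < 1 := by rw [hddef]; linarith
  have ha1' : a < 1 := by rw [hadef]; linarith
  -- integrability of F κ on subintervals of [-1,1], for κ ≥ 0
  set F : ℝ → ℝ → ℝ := fun κ s => g s * f (κ * s) with hFdef
  have hgint : ∀ α β : ℝ, -1 ≤ α → α ≤ β → β ≤ 1 → IntervalIntegrable g volume α β := by
    intro α β hα hαβ hβ
    refine (g_int r hr).mono_set ?_
    rw [uIcc_of_le (by norm_num : (-1:ℝ) ≤ 1)]
    exact uIcc_subset_Icc ⟨hα, hαβ.trans hβ⟩ ⟨hα.trans hαβ, hβ⟩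
  have hFint : ∀ κ : ℝ, 0 ≤ κ → ∀ α β : ℝ, -1 ≤ α → α ≤ β → β ≤ 1 →
      IntervalIntegrable (F κ) volume α β := by
    intro κ hκ α β hα hαβ hβ
    have hb := ((hgint α β hα hαβ hβ).mul_const (f κ))
    refine hb.mono_fun ?_ ?_
    · exact ((g_meas r).mul
        ((hmono.measurable).comp (measurable_id.const_mul κ))).aestronglyMeasurable
    · rw [uIoc_of_le hαβ, Filter.EventuallyLE, ae_restrict_iff' measurableSet_Ioc]
      filter_upwards with s hs
      have hsm : s ∈ Icc (-1:ℝ) 1 := ⟨hα.trans hs.1.le, hs.2.trans hβ⟩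
      have h1 : 0 ≤ F κ s := mul_nonneg (hgnn s hsm) (hpos _).le
      have h2 : F κ s ≤ g s * f κ := by
        apply mul_le_mul_of_nonneg_left _ (hgnn s hsm)
        exact hmono (by nlinarith [hsm.2])
      have h3 : 0 ≤ g s * f κ := mul_nonneg (hgnn s hsm) (hpos _).le
      rw [Real.norm_eq_abs, Real.norm_eq_abs, abs_of_nonneg h1, abs_of_nonneg h3]
      exact h2
  set Tl : ℝ → ℝ := fun κ => ∫ s in (-1:ℝ)..a, F κ s with hTldef
  set D : ℝ → ℝ := fun κ => ∫ s in (-1:ℝ)..(1:ℝ), F κ s with hDdef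
  set N : ℝ → ℝ := fun κ => ∫ s in a..(1:ℝ), F κ s with hNdef
  set Cg : ℝ := ∫ s in (-1:ℝ)..a, g s with hCgdef
  set cg : ℝ := ∫ s in c..d, g s with hcgdef
  have hcgpos : 0 < cg := by
    refine intervalIntegral.intervalIntegral_pos_of_pos_on
      (hgint c d (by linarith) hcd.le (by linarith)) ?_ hcd
    intro s hs
    exact hgpos s ⟨by linarith [hs.1], by linarith [hs.2]⟩
  have hCgnn : 0 ≤ Cg := by
    refine intervalIntegral.integral_nonneg (by linarith) ?_
    intro s hs
    exact hgnn s ⟨hs.1, by linarith [hs.2]⟩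
  -- eventual bounds
  have hDpos : ∀ κ : ℝ, 0 ≤ κ → 0 < D κ := by
    intro κ hκ
    refine intervalIntegral.intervalIntegral_pos_of_pos_on
      (hFint κ hκ (-1) 1 le_rfl (by norm_num) le_rfl) ?_ (by norm_num)
    intro s hs
    exact mul_pos (hgpos s hs) (hpos _)
  have hTlnn : ∀ κ : ℝ, 0 ≤ κ → 0 ≤ Tl κ := by
    intro κ hκ
    refine intervalIntegral.integral_nonneg (by linarith) ?_
    intro s hs
    exact mul_nonneg (hgnn s ⟨hs.1, by linarith [hs.2]⟩) (hpos _).le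
  have hsplit : ∀ κ : ℝ, 0 ≤ κ → Tl κ + N κ = D κ := by
    intro κ hκ
    exact intervalIntegral.integral_add_adjacent_intervals
      (hFint κ hκ (-1) a le_rfl (by linarith) (by linarith))
      (hFint κ hκ a 1 (by linarith) (by linarith) le_rfl)
  have hupper : ∀ κ : ℝ, 0 ≤ κ → Tl κ ≤ Cg * f (κ * a) := by
    intro κ hκ
    have h1 : Tl κ ≤ ∫ s in (-1:ℝ)..a, g s * f (κ * a) := by
      refine intervalIntegral.integral_mono_on (by linarith)
        (hFint κ hκ (-1) a le_rfl (by linarith) (by linarith))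
        ((hgint (-1) a le_rfl (by linarith) (by linarith)).mul_const _) ?_
      intro s hs
      exact mul_le_mul_of_nonneg_left
        (hmono (mul_le_mul_of_nonneg_left hs.2 hκ))
        (hgnn s ⟨hs.1, by linarith [hs.2]⟩)
    calc Tl κ ≤ ∫ s in (-1:ℝ)..a, g s * f (κ * a) := h1
      _ = Cg * f (κ * a) := by rw [intervalIntegral.integral_mul_const]
  have hlower : ∀ κ : ℝ, 0 ≤ κ → cg * f (κ * c) ≤ D κ := by
    intro κ hκ
    have h1 : (∫ s in c..d, g s * f (κ * c)) ≤ ∫ s in c..d, F κ s := by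
      refine intervalIntegral.integral_mono_on hcd.le
        ((hgint c d (by linarith) hcd.le (by linarith)).mul_const _)
        (hFint κ hκ c d (by linarith) hcd.le (by linarith)) ?_
      intro s hs
      exact mul_le_mul_of_nonneg_left
        (hmono (mul_le_mul_of_nonneg_left hs.1 hκ))
        (hgnn s ⟨by linarith [hs.1], by linarith [hs.2]⟩)
    have h2 : (∫ s in c..d, F κ s) ≤ D κ := by
      refine intervalIntegral.integral_mono_interval (by linarith) hcd.le (by linarith)
        ?_ (hFint κ hκ (-1) 1 le_rfl (by norm_num) le_rfl)
      rw [Filter.EventuallyLE, ae_restrict_iff' measurableSet_Ioc]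
      filter_upwards with s hs
      exact mul_nonneg (hgnn s ⟨hs.1.le, hs.2⟩) (hpos _).le
    calc cg * f (κ * c) = ∫ s in c..d, g s * f (κ * c) := by
          rw [intervalIntegral.integral_mul_const]
      _ ≤ ∫ s in c..d, F κ s := h1
      _ ≤ D κ := h2
  -- Tl/D → 0
  have hratio := ratio_tendsto f hpos hmono M hdiff htop a c hac hc0
  have hTlD : Tendsto (fun κ => Tl κ / D κ) atTop (nhds 0) := by
    apply squeeze_zero' (g := fun κ => (Cg / cg) * (f (κ * a) / f (κ * c)))
    · filter_upwards [eventually_ge_atTop (0:ℝ)] with κ hκ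
      exact div_nonneg (hTlnn κ hκ) (hDpos κ hκ).le
    · filter_upwards [eventually_ge_atTop (0:ℝ)] with κ hκ
      have h1 : Tl κ / D κ ≤ (Cg * f (κ * a)) / (cg * f (κ * c)) :=
        div_le_div₀ (mul_nonneg hCgnn (hpos _).le) (hupper κ hκ)
          (mul_pos hcgpos (hpos _)) (hlower κ hκ)
      calc Tl κ / D κ ≤ (Cg * f (κ * a)) / (cg * f (κ * c)) := h1
        _ = (Cg / cg) * (f (κ * a) / f (κ * c)) := by rw [div_mul_div_comm]
    · have := hratio.const_mul (Cg / cg)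
      simpa using this
  -- conclusion
  have hfinal : Tendsto (fun κ => 1 - Tl κ / D κ) atTop (nhds 1) := by
    have := tendsto_const_nhds (x := (1:ℝ)) (f := atTop).sub hTlD
    simpa using this
  refine hfinal.congr' ?_
  filter_upwards [eventually_ge_atTop (0:ℝ)] with κ hκ
  have hD := hDpos κ hκ
  have hS := hsplit κ hκ
  have : N κ = D κ - Tl κ := by linarith
  show 1 - Tl κ / D κ = N κ / D κ
  rw [this]
  field_simp
end

section
/- Let p ≥ 2 be an integer and let f : ℝ → (0,∞) be monotone non-decreasing on (-∞,0], monotone increasing on [0,∞), and differentiable on (M,∞) for some M > 0, with φ_f := f'/f on (M,∞). If κφ_f(κ) → c as κ → ∞ for some constant c > 0, then f does not provide high concentration: for every ε ∈ (0,1/2), the ratio (∫_{1-ε}^{1} (1-s²)^{(p-3)/2} f(κs) ds) / (∫_{-1}^{1} (1-s²)^{(p-3)/2} f(κs) ds) does not converge to 1 as κ → ∞. -/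
open MeasureTheory Filter Asymptotics Real Set

private lemma monoAux {f : ℝ → ℝ} (h1 : MonotoneOn f (Set.Iic (0:ℝ)))
    (h2 : StrictMonoOn f (Set.Ici (0:ℝ))) : Monotone f := by
  intro x y hxy
  rcases le_total y 0 with hy | hy
  · exact h1 (Set.mem_Iic.2 (hxy.trans hy)) (Set.mem_Iic.2 hy) hxy
  · rcases le_total x 0 with hx | hx
    · exact (h1 (Set.mem_Iic.2 hx) Set.self_mem_Iic hx).trans
        (h2.monotoneOn Set.self_mem_Ici (Set.mem_Ici.2 hy) hy)
    · exact h2.monotoneOn (Set.mem_Ici.2 hx) (Set.mem_Ici.2 hy) hxy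

private lemma weight_integrable (p : ℕ) (hp : 2 ≤ p) :
    IntervalIntegrable (fun s : ℝ => (1 - s ^ 2) ^ (((p:ℝ) - 3) / 2)) volume (-1) 1 := by
  have hmeas : AEStronglyMeasurable (fun s : ℝ => (1 - s ^ 2) ^ (((p:ℝ) - 3) / 2))
      (volume.restrict (Set.uIoc (-1:ℝ) 1)) :=
    (by measurability : Measurable fun s : ℝ => (1 - s ^ 2) ^ (((p:ℝ) - 3) / 2)).aestronglyMeasurable
  rcases eq_or_lt_of_le hp with hp2 | hp3
  · -- p = 2, exponent -1/2
    have hexp : ((p:ℝ) - 3) / 2 = -(1/2 : ℝ) := by rw [← hp2]; norm_num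
    rw [hexp] at hmeas ⊢
    have hbase : IntervalIntegrable (fun x : ℝ => x ^ (-(1/2):ℝ)) volume 0 2 :=
      intervalIntegral.intervalIntegrable_rpow' (by norm_num)
    have h1 : IntervalIntegrable (fun s : ℝ => (1 - s) ^ (-(1/2):ℝ)) volume (-1) 1 := by
      have := hbase.comp_sub_left 1
      norm_num at this
      exact this.symm
    have h2 : IntervalIntegrable (fun s : ℝ => (1 + s) ^ (-(1/2):ℝ)) volume (-1) 1 := by
      have := hbase.comp_add_left 1
      norm_num at this
      exact this
    refine (h1.add h2).mono_fun' hmeas ?_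
    rw [uIoc_of_le (by norm_num : (-1:ℝ) ≤ 1)]
    filter_upwards [ae_restrict_mem measurableSet_Ioc] with s hs
    have hs1 : -1 < s := hs.1
    have hs2 : s ≤ 1 := hs.2
    have hb0 : 0 ≤ 1 - s ^ 2 := by nlinarith
    rw [Real.norm_eq_abs, abs_of_nonneg (Real.rpow_nonneg hb0 _)]
    rcases le_total s 0 with hs0 | hs0
    · have hkey : (1 - s ^ 2) ^ (-(1/2):ℝ) ≤ (1 + s) ^ (-(1/2):ℝ) := by
        apply Real.rpow_le_rpow_of_nonpos (by linarith) (by nlinarith) (by norm_num)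
      have h1nn : (0:ℝ) ≤ (1 - s) ^ (-(1/2):ℝ) := Real.rpow_nonneg (by linarith) _
      linarith
    · rcases eq_or_lt_of_le hs2 with h1s | h1s
      · rw [h1s, show (1:ℝ) - 1^2 = 0 by norm_num, Real.zero_rpow (by norm_num : (-(1/2):ℝ) ≠ 0)]
        have h1nn : (0:ℝ) ≤ ((1:ℝ) - 1) ^ (-(1/2):ℝ) := Real.rpow_nonneg (by norm_num) _
        have h2nn : (0:ℝ) ≤ ((1:ℝ) + 1) ^ (-(1/2):ℝ) := Real.rpow_nonneg (by norm_num) _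
        linarith
      · have hkey : (1 - s ^ 2) ^ (-(1/2):ℝ) ≤ (1 - s) ^ (-(1/2):ℝ) := by
          apply Real.rpow_le_rpow_of_nonpos (by linarith) (by nlinarith) (by norm_num)
        have h2nn : (0:ℝ) ≤ (1 + s) ^ (-(1/2):ℝ) := Real.rpow_nonneg (by linarith) _
        linarith
  · -- p ≥ 3, exponent ≥ 0
    have hexp : (0:ℝ) ≤ ((p:ℝ) - 3) / 2 := by
      have : (3:ℝ) ≤ (p:ℝ) := by exact_mod_cast hp3
      linarith
    refine (intervalIntegrable_const (c := (1:ℝ))).mono_fun' hmeas ?_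
    rw [uIoc_of_le (by norm_num : (-1:ℝ) ≤ 1)]
    filter_upwards [ae_restrict_mem measurableSet_Ioc] with s hs
    have hb0 : 0 ≤ 1 - s ^ 2 := by nlinarith [hs.1, hs.2]
    have hb1 : 1 - s ^ 2 ≤ 1 := by nlinarith [hs.1, hs.2]
    rw [Real.norm_eq_abs, abs_of_nonneg (Real.rpow_nonneg hb0 _)]
    exact Real.rpow_le_one hb0 hb1 hexp

private lemma ratio_lower {f : ℝ → ℝ} (hpos : ∀ x, 0 < f x) {M c : ℝ} (hM : 0 < M) (hc : 0 < c)
    (hdiff : ∀ x ∈ Set.Ioi M, DifferentiableAt ℝ f x)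
    (hconst : Tendsto (fun κ => κ * phiF f κ) atTop (nhds c)) :
    ∀ᶠ κ in atTop, Real.exp (-(3*(c+1))) * f κ ≤ f (κ/4) := by
  have h1 : ∀ᶠ t in atTop, t * phiF f t < c + 1 :=
    hconst.eventually (eventually_lt_nhds (by linarith))
  obtain ⟨K₀, hK₀⟩ := eventually_atTop.1 h1
  set K := max K₀ (M + 1) with hK
  rw [eventually_atTop]
  refine ⟨4 * K, fun κ hκ => ?_⟩
  have hKM : M + 1 ≤ K := le_max_right _ _
  have hK0 : (0:ℝ) < K := by linarith
  have hκ0 : (0:ℝ) < κ := by linarith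
  set a := κ / 4 with ha
  have haK : K ≤ a := by rw [ha]; linarith
  have haM : M < a := by linarith
  have ha0 : 0 < a := by linarith
  have hab : a < κ := by rw [ha]; linarith
  set g := fun t => Real.log (f t) with hg
  have hg' : ∀ t ∈ Set.Ioo a κ, HasDerivAt g (deriv f t / f t) t := fun t ht =>
    ((hdiff t (Set.mem_Ioi.2 (lt_of_lt_of_le haM ht.1.le))).hasDerivAt).log (hpos t).ne'
  have hgc : ContinuousOn g (Set.Icc a κ) := fun t ht =>
    (((hdiff t (Set.mem_Ioi.2 (lt_of_lt_of_le haM ht.1))).hasDerivAt).log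
      (hpos t).ne').continuousAt.continuousWithinAt
  obtain ⟨ξ, hξ, hslope⟩ := exists_hasDerivAt_eq_slope g (fun t => deriv f t / f t) hab hgc hg'
  have hξa : a < ξ := hξ.1
  have hξ0 : 0 < ξ := lt_trans ha0 hξa
  have hξK : K₀ ≤ ξ := le_trans (le_trans (le_max_left _ _) haK) hξa.le
  have hlt : ξ * phiF f ξ < c + 1 := hK₀ ξ hξK
  have hphi : phiF f ξ ≤ (c + 1) / ξ := by
    rw [le_div_iff₀ hξ0]
    calc phiF f ξ * ξ = ξ * phiF f ξ := mul_comm _ _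
    _ ≤ c + 1 := hlt.le
  have hslope' : g κ - g a = (deriv f ξ / f ξ) * (κ - a) := by
    rw [hslope, div_mul_cancel₀]
    exact sub_ne_zero.2 hab.ne'
  have hbound : g κ - g a ≤ 3 * (c + 1) := by
    have h2 : (c + 1) / ξ ≤ (c + 1) / a := by
      apply div_le_div_of_nonneg_left (by linarith) ha0 hξa.le
    have h3 : deriv f ξ / f ξ ≤ (c + 1) / a := le_trans hphi h2
    have h4 : κ - a = 3 * a := by rw [ha]; ring
    rw [hslope', h4]
    calc deriv f ξ / f ξ * (3 * a) ≤ (c + 1) / a * (3 * a) := by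
          apply mul_le_mul_of_nonneg_right h3 (by linarith)
    _ = 3 * (c + 1) := by field_simp
  have hlog : Real.log (f κ) ≤ Real.log (f a) + 3 * (c + 1) := by
    simp only [hg] at hbound; linarith
  have := Real.exp_le_exp.2 hlog
  rw [Real.exp_add, Real.exp_log (hpos κ), Real.exp_log (hpos a)] at this
  calc Real.exp (-(3*(c+1))) * f κ ≤ Real.exp (-(3*(c+1))) * (f a * Real.exp (3*(c+1))) := by
        apply mul_le_mul_of_nonneg_left this (Real.exp_nonneg _)
  _ = f a := by rw [← mul_assoc, mul_comm (Real.exp _), mul_assoc, ← Real.exp_add]; simp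

set_option maxHeartbeats 2000000 in
/-- If `κ φ_f(κ) → c > 0`, then `f` does not provide high concentration. -/
theorem not_high_concentration_of_tendsto_const
    (p : ℕ) (hp : 2 ≤ p) (f : ℝ → ℝ)
    (hpos : ∀ x, 0 < f x)
    (hmono₁ : MonotoneOn f (Set.Iic (0:ℝ)))
    (hmono₂ : StrictMonoOn f (Set.Ici (0:ℝ)))
    (hdiff : ∃ M > (0:ℝ), ∀ x ∈ Set.Ioi M, DifferentiableAt ℝ f x)
    (c : ℝ) (hc : 0 < c)
    (hconst : Tendsto (fun κ => κ * phiF f κ) atTop (nhds c)) :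
    ∀ ε : ℝ, 0 < ε → ε < 1 / 2 →
      ¬ Tendsto (fun κ =>
          (∫ s in (1 - ε)..1, (1 - s ^ 2) ^ (((p:ℝ) - 3) / 2) * f (κ * s)) /
          (∫ s in (-1:ℝ)..1, (1 - s ^ 2) ^ (((p:ℝ) - 3) / 2) * f (κ * s)))
        atTop (nhds 1) := by
  intro ε hε hε2 hT
  obtain ⟨M, hM, hdiffM⟩ := hdiff
  have hfmono : Monotone f := monoAux hmono₁ hmono₂
  have hfmeas : Measurable f := hfmono.measurable
  set w : ℝ → ℝ := fun s => (1 - s ^ 2) ^ (((p:ℝ) - 3) / 2) with hw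
  have hw_int : IntervalIntegrable w volume (-1) 1 := weight_integrable p hp
  have hwnn : ∀ s : ℝ, -1 ≤ s → s ≤ 1 → 0 ≤ w s := fun s h1 h2 =>
    Real.rpow_nonneg (by nlinarith) _
  have hwmeas : Measurable w := by measurability
  set δ : ℝ := Real.exp (-(3*(c+1))) with hδdef
  have hδ : 0 < δ := Real.exp_pos _
  have hA : ∀ᶠ κ in atTop, δ * f κ ≤ f (κ/4) := ratio_lower hpos hM hc hdiffM hconst
  set Cw : ℝ := ∫ s in (1-ε)..1, w s with hCw
  set C₂ : ℝ := ∫ s in (1/4:ℝ)..(1/2), w s with hC₂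
  have hCw0 : 0 ≤ Cw :=
    intervalIntegral.integral_nonneg (by linarith) (fun s hs => hwnn s (by linarith [hs.1]) hs.2)
  have hC₂pos : 0 < C₂ := by
    apply intervalIntegral.integral_pos (by norm_num)
    · apply ContinuousOn.rpow_const
      · fun_prop
      · intro s hs
        simp only [Set.mem_Icc] at hs
        left
        nlinarith [hs.1, hs.2]
    · intro s hs
      simp only [Set.mem_Ioc] at hs
      exact hwnn s (by linarith [hs.1]) (by linarith [hs.2])
    · refine ⟨1/4, ⟨le_refl _, by norm_num⟩, ?_⟩
      apply Real.rpow_pos_of_pos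
      norm_num
  set r : ℝ := Cw / (Cw + δ * C₂) with hr
  have hden : 0 < Cw + δ * C₂ := by positivity
  have hr1 : r < 1 := by
    rw [hr, div_lt_one hden]
    nlinarith
  have h2 : ∀ᶠ κ in atTop, r < (∫ s in (1 - ε)..1, w s * f (κ * s)) /
      (∫ s in (-1:ℝ)..1, w s * f (κ * s)) := hT.eventually (eventually_gt_nhds hr1)
  have h3 : ∀ᶠ κ in atTop, (∫ s in (1 - ε)..1, w s * f (κ * s)) /
      (∫ s in (-1:ℝ)..1, w s * f (κ * s)) ≤ r := by
    filter_upwards [hA, eventually_ge_atTop (1:ℝ)] with κ hκA hκ1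
    have hκ0 : (0:ℝ) < κ := by linarith
    -- integrability of the full integrand
    have hFmeas : Measurable (fun s => w s * f (κ * s)) :=
      hwmeas.mul (hfmeas.comp (measurable_const_mul κ))
    have hFint : IntervalIntegrable (fun s => w s * f (κ * s)) volume (-1) 1 := by
      refine (hw_int.const_mul (f κ)).mono_fun' hFmeas.aestronglyMeasurable ?_
      rw [uIoc_of_le (by norm_num : (-1:ℝ) ≤ 1)]
      filter_upwards [ae_restrict_mem measurableSet_Ioc] with s hs
      have hwn := hwnn s hs.1.le hs.2
      have hfn := (hpos (κ * s)).le
      rw [Real.norm_eq_abs, abs_of_nonneg (mul_nonneg hwn hfn)]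
      have : f (κ * s) ≤ f κ := hfmono (by nlinarith [hs.2])
      nlinarith
    have hsub : ∀ x y : ℝ, -1 ≤ x → x ≤ 1 → -1 ≤ y → y ≤ 1 →
        Set.uIcc x y ⊆ Set.uIcc (-1:ℝ) 1 := by
      intro x y hx1 hx2 hy1 hy2
      apply Set.uIcc_subset_uIcc <;>
        · rw [Set.uIcc_of_le (by norm_num : (-1:ℝ) ≤ 1)]; constructor <;> linarith
    have hε1 : (1:ℝ)/2 < 1 - ε := by linarith
    have hint₁ : IntervalIntegrable (fun s => w s * f (κ * s)) volume (-1) (1-ε) :=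
      hFint.mono_set (hsub _ _ (by norm_num) (by norm_num) (by linarith) (by linarith))
    have hint₂ : IntervalIntegrable (fun s => w s * f (κ * s)) volume (1-ε) 1 :=
      hFint.mono_set (hsub _ _ (by linarith) (by linarith) (by norm_num) (by norm_num))
    have hintA : IntervalIntegrable (fun s => w s * f (κ * s)) volume (-1) (1/4) :=
      hFint.mono_set (hsub _ _ (by norm_num) (by norm_num) (by norm_num) (by norm_num))
    have hintB : IntervalIntegrable (fun s => w s * f (κ * s)) volume (1/4) (1/2) :=
      hFint.mono_set (hsub _ _ (by norm_num) (by norm_num) (by norm_num) (by norm_num))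
    have hintC : IntervalIntegrable (fun s => w s * f (κ * s)) volume (1/2) (1-ε) :=
      hFint.mono_set (hsub _ _ (by norm_num) (by norm_num) (by linarith) (by linarith))
    set N : ℝ := ∫ s in (1-ε)..1, w s * f (κ * s) with hN
    set I1 : ℝ := ∫ s in (-1:ℝ)..(1-ε), w s * f (κ * s) with hI1
    have hsplit : I1 + N = ∫ s in (-1:ℝ)..1, w s * f (κ * s) :=
      intervalIntegral.integral_add_adjacent_intervals hint₁ hint₂
    have hN0 : 0 ≤ N :=
      intervalIntegral.integral_nonneg (by linarith)
        (fun s hs => mul_nonneg (hwnn s (by linarith [hs.1]) hs.2) (hpos _).le)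
    have hNle : N ≤ Cw * f κ := by
      have hmono_int : IntervalIntegrable (fun s => w s * f κ) volume (1-ε) 1 :=
        (hw_int.mono_set (hsub _ _ (by linarith) (by linarith) (by norm_num)
          (by norm_num))).mul_const (f κ)
      have := intervalIntegral.integral_mono_on (by linarith : 1-ε ≤ (1:ℝ)) hint₂ hmono_int
        (fun s hs => by
          have hfs : f (κ * s) ≤ f κ := hfmono (by nlinarith [hs.2])
          have hwn := hwnn s (by linarith [hs.1]) hs.2
          nlinarith)
      rwa [intervalIntegral.integral_mul_const] at this
    have hIB : f (κ/4) * C₂ ≤ ∫ s in (1/4:ℝ)..(1/2), w s * f (κ * s) := by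
      have hmono_int : IntervalIntegrable (fun s => w s * f (κ/4)) volume (1/4) (1/2) :=
        (hw_int.mono_set (hsub _ _ (by norm_num) (by norm_num) (by norm_num)
          (by norm_num))).mul_const (f (κ/4))
      have := intervalIntegral.integral_mono_on (by norm_num : (1:ℝ)/4 ≤ 1/2) hmono_int hintB
        (fun s hs => by
          have hfs : f (κ/4) ≤ f (κ * s) := by
            apply hfmono
            rw [div_eq_mul_inv]
            nlinarith [hs.1]
          have hwn := hwnn s (by linarith [hs.1]) (by linarith [hs.2])
          nlinarith)
      rwa [intervalIntegral.integral_mul_const, mul_comm] at this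
    have hI1ge : f (κ/4) * C₂ ≤ I1 := by
      have e1 : (∫ s in (-1:ℝ)..(1/4), w s * f (κ * s))
          + (∫ s in (1/4:ℝ)..(1/2), w s * f (κ * s)) = ∫ s in (-1:ℝ)..(1/2), w s * f (κ * s) :=
        intervalIntegral.integral_add_adjacent_intervals hintA hintB
      have e2 : (∫ s in (-1:ℝ)..(1/2), w s * f (κ * s))
          + (∫ s in (1/2:ℝ)..(1-ε), w s * f (κ * s)) = I1 :=
        intervalIntegral.integral_add_adjacent_intervals (hintA.trans hintB) hintC
      have n1 : 0 ≤ ∫ s in (-1:ℝ)..(1/4), w s * f (κ * s) :=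
        intervalIntegral.integral_nonneg (by norm_num)
          (fun s hs => mul_nonneg (hwnn s hs.1 (by linarith [hs.2])) (hpos _).le)
      have n2 : 0 ≤ ∫ s in (1/2:ℝ)..(1-ε), w s * f (κ * s) :=
        intervalIntegral.integral_nonneg (by linarith)
          (fun s hs => mul_nonneg (hwnn s (by linarith [hs.1]) (by linarith [hs.2])) (hpos _).le)
      linarith [hIB]
    -- final arithmetic
    set D : ℝ := ∫ s in (-1:ℝ)..1, w s * f (κ * s) with hD
    set m : ℝ := δ * C₂ * f κ with hm
    have hm0 : 0 < m := by
      have := hpos κ; positivity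
    have hmI : m ≤ I1 := by
      have : δ * f κ * C₂ ≤ f (κ/4) * C₂ := by nlinarith [hC₂pos.le]
      calc m = δ * f κ * C₂ := by rw [hm]; ring
      _ ≤ f (κ/4) * C₂ := this
      _ ≤ I1 := hI1ge
    have hDge : N + m ≤ D := by rw [← hsplit]; linarith
    have hD0 : 0 < D := lt_of_lt_of_le (by linarith) hDge
    have hrA : Cw * f κ / (Cw * f κ + m) = r := by
      rw [hr, hm, show Cw * f κ + δ * C₂ * f κ = (Cw + δ * C₂) * f κ by ring,
        mul_div_mul_right _ _ (hpos κ).ne']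
    rw [div_le_iff₀ hD0]
    have hAm0 : 0 < Cw * f κ + m := by nlinarith [hpos κ]
    have key : N ≤ r * (N + m) := by
      rw [← hrA, div_mul_eq_mul_div, le_div_iff₀ hAm0]
      nlinarith [hNle, hm0.le]
    have hr0 : 0 ≤ r := by rw [hr]; positivity
    nlinarith [mul_le_mul_of_nonneg_left hDge hr0]
  obtain ⟨κ, hκ2, hκ3⟩ := (h2.and h3).exists
  linarith
end

section
/- For every b > 0, the function f_b(z) := exp(z^b) belongs to the class 𝓕. In particular, since κφ_{f_b}(κ) = bκ^b, for all ξ, ζ > -1 one has ∫_{-1}^{1} (1-s)^ξ (1+s)^ζ |exp((κs)^b − κ^b) − exp((s−1)bκ^b)| ds = o(κ^{−b(ξ+1)}) as κ → ∞. -/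
open MeasureTheory Filter Asymptotics Real Set

/-- Signed power `z^b := sgn(z)|z|^b`. -/
noncomputable def spow (z b : ℝ) : ℝ := Real.sign z * |z| ^ b

/-- Membership in the class `𝓕` of angular functions. -/
structure MemF (f : ℝ → ℝ) : Prop where
  pos : ∀ x, 0 < f x
  monoNonpos : MonotoneOn f (Set.Iic (0:ℝ))
  strictMonoNonneg : StrictMonoOn f (Set.Ici (0:ℝ))
  diff : ∃ M > (0:ℝ), ∀ x ∈ Set.Ioi M, DifferentiableAt ℝ f x
  tendsto_top : Tendsto (fun κ => κ * phiF f κ) atTop atTop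
  monoOn : ∃ M' > (0:ℝ), MonotoneOn (fun κ => κ * phiF f κ) (Set.Ioi M')
  littleO : ∀ ξ ζ : ℝ, -1 < ξ → -1 < ζ →
    (fun κ => ∫ s in (-1:ℝ)..1, (1 - s) ^ ξ * (1 + s) ^ ζ *
        |f (κ * s) / f κ - Real.exp ((s - 1) * (κ * phiF f κ))|)
      =o[atTop] (fun κ => (κ * phiF f κ) ^ (-(ξ + 1)))

lemma spow_nonneg_eq {x b : ℝ} (hb : 0 < b) (hx : 0 ≤ x) : spow x b = x ^ b := by
  rcases eq_or_lt_of_le hx with h | h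
  · simp [spow, ← h, Real.sign_zero, Real.zero_rpow hb.ne']
  · rw [spow, Real.sign_of_pos h, abs_of_pos h, one_mul]

lemma spow_nonpos {x b : ℝ} (hx : x ≤ 0) : spow x b ≤ 0 := by
  rcases eq_or_lt_of_le hx with h | h
  · simp [spow, h, Real.sign_zero]
  · rw [spow, Real.sign_of_neg h]
    nlinarith [Real.rpow_nonneg (abs_nonneg x) b]

lemma spow_neg_eq {x b : ℝ} (hx : x < 0) : spow x b = -(|x| ^ b) := by
  rw [spow, Real.sign_of_neg hx]; ring

lemma spow_mul_of_pos {κ s b : ℝ} (hb : 0 < b) (hκ : 0 < κ) :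
    spow (κ * s) b = κ ^ b * spow s b := by
  rcases lt_trichotomy s 0 with h | h | h
  · rw [spow_neg_eq h, spow_neg_eq (by nlinarith), abs_mul, abs_of_pos hκ,
      Real.mul_rpow hκ.le (abs_nonneg s)]
    ring
  · simp [h, spow, Real.sign_zero]
  · rw [spow_nonneg_eq hb (by positivity), spow_nonneg_eq hb h.le,
      Real.mul_rpow hκ.le h.le]
lemma abs_sign_le_one (s : ℝ) : |Real.sign s| ≤ 1 := by
  rcases lt_trichotomy s 0 with h|h|h <;>
    simp [Real.sign_of_neg, Real.sign_of_pos, h, le_refl]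

lemma abs_spow_le_one {s b : ℝ} (hb : 0 < b) (hs : |s| ≤ 1) : |spow s b| ≤ 1 := by
  rw [spow, abs_mul, abs_of_nonneg (Real.rpow_nonneg (abs_nonneg s) b)]
  calc |Real.sign s| * |s| ^ b ≤ 1 * 1 :=
        mul_le_mul (abs_sign_le_one s) (Real.rpow_le_one (abs_nonneg s) hs hb.le)
          (by positivity) zero_le_one
      _ = 1 := by ring

lemma step1 {b : ℝ} (hb : 0 < b) :
    ∀ s ∈ Icc (2⁻¹:ℝ) 1, |s ^ (b-1) - 1| ≤ (|b-1| * max 1 ((2:ℝ)⁻¹ ^ (b-2))) * (1 - s) := by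
  intro s hs
  have h2 : (0:ℝ) < 2⁻¹ := by norm_num
  have key := norm_image_sub_le_of_norm_deriv_le_segment'
    (f := fun t : ℝ => t ^ (b-1)) (f' := fun t : ℝ => (b-1) * t ^ (b-2))
    (C := |b-1| * max 1 ((2:ℝ)⁻¹ ^ (b-2)))
    (a := s) (b := 1) ?_ ?_ 1 (right_mem_Icc.2 hs.2)
  · simpa [Real.one_rpow, abs_sub_comm] using key
  · intro t ht
    have htpos : 0 < t := lt_of_lt_of_le h2 (hs.1.trans ht.1)
    have := (Real.hasDerivAt_rpow_const (p := b-1) (Or.inl htpos.ne')).hasDerivWithinAt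
      (s := Icc s 1)
    simpa [show b-1-1 = b-2 by ring] using this
  · intro t ht
    have ht1 : 2⁻¹ ≤ t := hs.1.trans ht.1
    have htpos : (0:ℝ) < t := lt_of_lt_of_le h2 ht1
    rw [Real.norm_eq_abs, abs_mul, abs_of_nonneg (Real.rpow_nonneg htpos.le _)]
    apply mul_le_mul_of_nonneg_left _ (abs_nonneg _)
    rcases le_or_gt 0 (b-2) with h | h
    · exact le_max_of_le_left (Real.rpow_le_one htpos.le ht.2.le h)
    · exact le_max_of_le_right (Real.rpow_le_rpow_of_nonpos h2 ht1 h.le)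

lemma taylor_bound {b : ℝ} (hb : 0 < b) : ∃ C > 0, ∀ s ∈ Icc (-1:ℝ) 1,
    |spow s b - 1 - b*(s-1)| ≤ C * (1-s)^2 := by
  set L := |b-1| * max 1 ((2:ℝ)⁻¹ ^ (b-2)) with hL
  have hL0 : 0 ≤ L := by positivity
  refine ⟨max (b*L) (8+8*b), lt_max_of_lt_right (by linarith), fun s hs => ?_⟩
  rcases le_or_gt (2⁻¹:ℝ) s with h | h
  · -- s ∈ [1/2, 1]
    have hs' : s ∈ Icc (2⁻¹:ℝ) 1 := ⟨h, hs.2⟩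
    have h2 : (0:ℝ) < 2⁻¹ := by norm_num
    have hspos : (0:ℝ) < s := lt_of_lt_of_le h2 h
    have key := norm_image_sub_le_of_norm_deriv_le_segment'
      (f := fun t : ℝ => t ^ b - 1 - b*(t-1)) (f' := fun t : ℝ => b * t ^ (b-1) - b)
      (C := (b*L) * (1-s)) (a := s) (b := 1) ?_ ?_ 1 (right_mem_Icc.2 hs.2)
    · rw [spow_nonneg_eq hb hspos.le]
      have : |(1:ℝ) ^ b - 1 - b*(1-1) - (s ^ b - 1 - b*(s-1))| ≤ (b*L)*(1-s) * (1-s) := by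
        simpa using key
    
      calc |s ^ b - 1 - b*(s-1)| = |(1:ℝ) ^ b - 1 - b*(1-1) - (s ^ b - 1 - b*(s-1))| := by
            rw [Real.one_rpow, ← abs_neg]; ring_nf
          _ ≤ (b*L)*(1-s)*(1-s) := this
          _ ≤ max (b*L) (8+8*b) * (1-s)^2 := by
            have h1s : 0 ≤ 1 - s := by linarith [hs.2]
            have := le_max_left (b*L) (8+8*b)
            nlinarith
    · intro t ht
      have htpos : 0 < t := lt_of_lt_of_le h2 (h.trans ht.1)
      have h1 := (Real.hasDerivAt_rpow_const (p := b) (Or.inl htpos.ne'))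
      have h2' : HasDerivAt (fun t : ℝ => t ^ b - 1 - b*(t-1)) (b * t ^ (b-1) - b * 1) t :=
        (h1.sub_const 1).sub (((hasDerivAt_id t).sub_const 1).const_mul b)
      simpa using h2'.hasDerivWithinAt
    · intro t ht
      have ht' : t ∈ Icc (2⁻¹:ℝ) 1 := ⟨h.trans ht.1, ht.2.le⟩
      have := step1 hb t ht'
      have h1t : 1 - t ≤ 1 - s := by linarith [ht.1]
      have h1s : 0 ≤ 1 - s := by linarith [hs.2]
      calc ‖b * t ^ (b-1) - b‖ = b * |t ^ (b-1) - 1| := by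
            rw [Real.norm_eq_abs, show b * t ^ (b-1) - b = b * (t ^ (b-1) - 1) by ring,
              abs_mul, abs_of_pos hb]
          _ ≤ b * (L * (1-t)) := by
            apply mul_le_mul_of_nonneg_left _ hb.le
            exact this.trans (mul_le_mul_of_nonneg_left (le_refl _) hL0)
          _ = (b*L)*(1-t) := by ring
          _ ≤ (b*L)*(1-s) := mul_le_mul_of_nonneg_left h1t (by positivity)
  · -- s ∈ [-1, 1/2)
    have h1s : (2⁻¹:ℝ) ≤ 1 - s := by linarith
    have habs : |s| ≤ 1 := abs_le.2 ⟨hs.1, hs.2⟩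
    have h1 : |spow s b| ≤ 1 := abs_spow_le_one hb habs
    have h2 : |s - 1| ≤ 2 := by rw [abs_le]; constructor <;> linarith [hs.1, hs.2]
    have key : |spow s b - 1 - b*(s-1)| ≤ 2 + 2*b := by
      calc |spow s b - 1 - b*(s-1)| ≤ |spow s b - 1| + |b*(s-1)| := abs_sub _ _
        _ ≤ (|spow s b| + 1) + b*|s-1| := by
            rw [abs_mul, abs_of_pos hb]
            gcongr
            exact (abs_sub _ _).trans (by simp)
        _ ≤ (1+1) + b*2 := by gcongr
        _ = 2 + 2*b := by ring
    calc |spow s b - 1 - b*(s-1)| ≤ 2 + 2*b := key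
      _ ≤ (8+8*b) * (1-s)^2 := by
          have hq : (4⁻¹:ℝ) ≤ (1-s)^2 := by nlinarith
          nlinarith [mul_le_mul_of_nonneg_left hq (by linarith : (0:ℝ) ≤ 8+8*b)]
      _ ≤ max (b*L) (8+8*b) * (1-s)^2 :=
          mul_le_mul_of_nonneg_right (le_max_right _ _) (sq_nonneg _)
lemma spow_upper {b : ℝ} (hb : 0 < b) : ∀ s ∈ Icc (-1:ℝ) 1,
    spow s b - 1 ≤ -(min b 2⁻¹) * (1 - s) := by
  intro s hs
  have ha1 : min b 2⁻¹ ≤ 2⁻¹ := min_le_right _ _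
  have ha0 : 0 < min b 2⁻¹ := lt_min hb (by norm_num)
  have h1s : 0 ≤ 1 - s := by linarith [hs.2]
  rcases le_or_gt s 0 with h | h
  · have := spow_nonpos (b := b) h
    have h2 : (1:ℝ) - s ≤ 2 := by linarith [hs.1]
    nlinarith
  · rw [spow_nonneg_eq hb h.le]
    rcases le_or_gt b 1 with hb1 | hb1
    · have := rpow_one_add_le_one_add_mul_self (s := s - 1) (p := b)
        (by linarith [hs.1]) hb.le hb1
      have heq : (1 + (s-1)) = s := by ring
      rw [heq] at this
      have hab : min b 2⁻¹ ≤ b := min_le_left _ _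
      nlinarith
    · have hsb : s ^ b ≤ s ^ (1:ℝ) := Real.rpow_le_rpow_of_exponent_ge h hs.2 hb1.le
      rw [Real.rpow_one] at hsb
      nlinarith

lemma exp_diff_le {x y : ℝ} : |Real.exp x - Real.exp y| ≤ |x - y| * Real.exp (max x y) := by
  wlog h : y ≤ x generalizing x y
  · rw [abs_sub_comm, abs_sub_comm x y, max_comm]; exact this (by linarith)
  rw [max_eq_left h, abs_of_nonneg (sub_nonneg.2 (Real.exp_le_exp.2 h)),
    abs_of_nonneg (sub_nonneg.2 h)]
  have h1 : 1 + (y - x) ≤ Real.exp (y - x) := Real.add_one_le_exp _ |>.trans_eq' (by ring)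
  have h2 : Real.exp y = Real.exp (y - x) * Real.exp x := by
    rw [← Real.exp_add]; ring_nf
  nlinarith [Real.exp_pos x, Real.exp_pos y]

lemma key_pointwise {b : ℝ} (hb : 0 < b) : ∃ C > 0, ∀ lam : ℝ, 0 < lam →
    ∀ s ∈ Icc (-1:ℝ) 1,
    |Real.exp (lam * spow s b - lam) - Real.exp ((s-1)*(b*lam))| ≤
      C * lam * (1-s)^2 * Real.exp (-((min b 2⁻¹ * lam) * (1-s))) := by
  obtain ⟨C, hC, hT⟩ := taylor_bound hb
  refine ⟨C, hC, fun lam hlam s hs => ?_⟩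
  set a := min b 2⁻¹ with ha
  have ha0 : 0 < a := lt_min hb (by norm_num)
  have hab : a ≤ b := min_le_left _ _
  have h1s : 0 ≤ 1 - s := by linarith [hs.2]
  set x := lam * spow s b - lam with hx
  set y := (s-1)*(b*lam) with hy
  have hmax : max x y ≤ -((a * lam) * (1-s)) := by
    have hxle : x ≤ -((a * lam) * (1-s)) := by
      have := spow_upper hb s hs
      calc x = lam * (spow s b - 1) := by rw [hx]; ring
        _ ≤ lam * (-a * (1-s)) := mul_le_mul_of_nonneg_left this hlam.le
        _ = -((a * lam) * (1-s)) := by ring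
    have hyle : y ≤ -((a * lam) * (1-s)) := by
      rw [hy]
      nlinarith [mul_le_mul_of_nonneg_right (mul_le_mul_of_nonneg_right hab hlam.le) h1s]
    exact max_le hxle hyle
  have hdiff : |x - y| ≤ C * lam * (1-s)^2 := by
    have : x - y = lam * (spow s b - 1 - b*(s-1)) := by rw [hx, hy]; ring
    rw [this, abs_mul, abs_of_pos hlam]
    calc lam * |spow s b - 1 - b*(s-1)| ≤ lam * (C * (1-s)^2) :=
          mul_le_mul_of_nonneg_left (hT s hs) hlam.le
      _ = C * lam * (1-s)^2 := by ring
  calc |Real.exp x - Real.exp y| ≤ |x - y| * Real.exp (max x y) := exp_diff_le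
    _ ≤ (C * lam * (1-s)^2) * Real.exp (-((a * lam) * (1-s))) := by
        apply mul_le_mul hdiff (Real.exp_le_exp.2 hmax) (Real.exp_pos _).le
        positivity
    _ = C * lam * (1-s)^2 * Real.exp (-((a * lam) * (1-s))) := by ring

lemma scaled_gamma {p : ℝ} (hp : -1 < p) : ∃ cG ≥ 0, ∀ μ : ℝ, 0 < μ →
    ∫ u in (0:ℝ)..1, u ^ p * Real.exp (-(μ*u)) ≤ cG * μ ^ (-(p+1)) := by
  set f : ℝ → ℝ := fun w => w ^ p * Real.exp (-w) with hf
  have hint : IntegrableOn f (Ioi 0) := by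
    have h := Real.GammaIntegral_convergent (s := p + 1) (by linarith)
    simp only [add_sub_cancel_right] at h
    exact h.congr_fun (fun x hx => mul_comm _ _) measurableSet_Ioi
  refine ⟨∫ w in Ioi 0, f w, setIntegral_nonneg measurableSet_Ioi
    (fun w hw => mul_nonneg (Real.rpow_nonneg (le_of_lt hw) p) (Real.exp_pos _).le), fun μ hμ => ?_⟩
  have key : (∫ u in (0:ℝ)..1, u ^ p * Real.exp (-(μ*u)))
      = μ ^ (-p) * ∫ u in (0:ℝ)..1, f (μ * u) := by
    rw [← intervalIntegral.integral_const_mul]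
    apply intervalIntegral.integral_congr
    intro u hu
    have hu0 : 0 ≤ u := by
      rcases hu with ⟨h1, _⟩
      simpa using h1
    simp only [hf]
    rw [Real.mul_rpow hμ.le hu0, ← mul_assoc, ← mul_assoc, ← Real.rpow_add hμ]
    simp
  rw [key, intervalIntegral.integral_comp_mul_left f hμ.ne', mul_zero, mul_one, smul_eq_mul]
  have h2 : ∫ w in (0:ℝ)..μ, f w ≤ ∫ w in Ioi 0, f w := by
    rw [intervalIntegral.integral_of_le hμ.le]
    apply setIntegral_mono_set hint
    · filter_upwards [ae_restrict_mem measurableSet_Ioi] with w hw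
      have : (0:ℝ) < w := hw
      positivity
    · exact HasSubset.Subset.eventuallyLE Ioc_subset_Ioi_self
  calc μ ^ (-p) * (μ⁻¹ * ∫ w in (0:ℝ)..μ, f w)
      ≤ μ ^ (-p) * (μ⁻¹ * ∫ w in Ioi 0, f w) := by
        apply mul_le_mul_of_nonneg_left _ (Real.rpow_nonneg hμ.le _)
        exact mul_le_mul_of_nonneg_left h2 (by positivity)
    _ = (∫ w in Ioi 0, f w) * μ ^ (-(p+1)) := by
        rw [show -(p+1) = -p + (-1) by ring, Real.rpow_add hμ, Real.rpow_neg_one]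
        ring
lemma rpow_merge {u ξ : ℝ} (hξ : -1 < ξ) (hu : 0 ≤ u) : u ^ ξ * u^(2:ℕ) = u ^ (ξ+2) := by
  rcases eq_or_lt_of_le hu with h | h
  · rw [← h]
    rw [Real.zero_rpow (by linarith : ξ + 2 ≠ 0)]
    norm_num
  · rw [← Real.rpow_natCast u 2, ← Real.rpow_add h]
    norm_num

lemma integral_est {b ξ ζ : ℝ} (hb : 0 < b) (hξ : -1 < ξ) (hζ : -1 < ζ) :
    ∃ c1 c2 : ℝ, 0 ≤ c1 ∧ 0 ≤ c2 ∧ ∀ lam : ℝ, 0 < lam →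
    (∫ s in (-1:ℝ)..1, (1-s)^ξ * (1+s)^ζ *
        |Real.exp (lam * spow s b - lam) - Real.exp ((s-1)*(b*lam))|)
      ≤ c1 * lam * Real.exp (-(min b 2⁻¹ * lam)) +
        c2 * lam * (min b 2⁻¹ * lam) ^ (-(ξ+3)) := by
  obtain ⟨C, hC, hkey⟩ := key_pointwise hb
  obtain ⟨cG, hcG, hsg⟩ := scaled_gamma (p := ξ+2) (by linarith)
  set a := min b 2⁻¹ with ha
  have ha0 : 0 < a := lt_min hb (by norm_num)
  set Mζ := max 1 ((2:ℝ) ^ ζ) with hMζ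
  have hMζ0 : 0 < Mζ := lt_of_lt_of_le one_pos (le_max_left _ _)
  -- integrability of (1+s)^ζ on Icc (-1) 0
  have ψint : IntegrableOn (fun s : ℝ => (1+s) ^ ζ) (Icc (-1:ℝ) 0) := by
    have h0 : IntervalIntegrable (fun x : ℝ => x ^ ζ) volume 0 1 := intervalIntegral.intervalIntegrable_rpow' hζ
    have h1 := h0.comp_add_right 1
    simp only [zero_sub, sub_self] at h1
    have h2 : IntervalIntegrable (fun x : ℝ => (1+x) ^ ζ) volume (-1) 0 := by
      apply h1.congr
      · intro x _
        show (x+1)^ζ = (1+x)^ζ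
        rw [add_comm]
    
    exact (intervalIntegrable_iff_integrableOn_Icc_of_le (by norm_num)).1 h2
  set Bζ := ∫ s in Ioc (-1:ℝ) 0, (1+s) ^ ζ with hBζ
  have hBζ0 : 0 ≤ Bζ := setIntegral_nonneg measurableSet_Ioc
    (fun s hs => Real.rpow_nonneg (by linarith [hs.1]) _)
  refine ⟨C * 2 ^ (ξ+2) * Bζ, C * Mζ * cG, by positivity, by positivity, fun lam hlam => ?_⟩
  set μ := a * lam with hμdef
  have hμ : 0 < μ := mul_pos ha0 hlam
  set φ : ℝ → ℝ := fun s => C*lam*(1-s)^(ξ+2)*Real.exp (-(μ*(1-s))) with hφ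
  set g : ℝ → ℝ := fun s => φ s * (1+s) ^ ζ with hg
  have hφcont : Continuous φ := by
    apply Continuous.mul
    · apply Continuous.mul continuous_const
      exact Continuous.rpow_const (continuous_const.sub continuous_id)
        (fun x => Or.inr (by linarith))
    · exact Real.continuous_exp.comp (continuous_const.mul (continuous_const.sub continuous_id)).neg
  have hφnonneg : ∀ s : ℝ, s ≤ 1 → 0 ≤ φ s := by
    intro s hs
    have h1 : (0:ℝ) ≤ 1 - s := by linarith
    have := Real.rpow_nonneg h1 (ξ+2)
    positivity
  -- integrability of g
  have hgi1 : IntegrableOn g (Ioc (-1:ℝ) 0) := by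
    apply IntegrableOn.mono_set _ Ioc_subset_Icc_self
    exact (ψint.continuousOn_mul hφcont.continuousOn isCompact_Icc)
  have hgi2 : IntegrableOn g (Ioc (0:ℝ) 1) := by
    apply IntegrableOn.mono_set _ Ioc_subset_Icc_self
    apply ContinuousOn.integrableOn_Icc
    apply ContinuousOn.mul hφcont.continuousOn
    apply ContinuousOn.rpow_const (continuous_const.add continuous_id).continuousOn
    intro x hx
    exact Or.inl (by simp at hx ⊢; linarith [hx.1])
  have hgi : IntegrableOn g (Ioc (-1:ℝ) 1) := by
    rw [← Ioc_union_Ioc_eq_Ioc (by norm_num : (-1:ℝ) ≤ 0) (by norm_num : (0:ℝ) ≤ 1),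
      integrableOn_union]
    exact ⟨hgi1, hgi2⟩
  -- step: LHS ≤ ∫ g over Ioc (-1) 1
  rw [intervalIntegral.integral_of_le (by norm_num : (-1:ℝ) ≤ 1)]
  have hmono : (∫ s in Ioc (-1:ℝ) 1, (1-s)^ξ * (1+s)^ζ *
      |Real.exp (lam * spow s b - lam) - Real.exp ((s-1)*(b*lam))|)
      ≤ ∫ s in Ioc (-1:ℝ) 1, g s := by
    apply integral_mono_of_nonneg
    · filter_upwards [ae_restrict_mem measurableSet_Ioc] with s hs
      have h1 : (0:ℝ) ≤ 1 - s := by linarith [hs.2]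
      have h2 : (0:ℝ) ≤ 1 + s := by linarith [hs.1]
      have := Real.rpow_nonneg h1 ξ
      have := Real.rpow_nonneg h2 ζ
      positivity
    · exact hgi
    · filter_upwards [ae_restrict_mem measurableSet_Ioc] with s hs
      have h1 : (0:ℝ) ≤ 1 - s := by linarith [hs.2]
      have h2 : (0:ℝ) ≤ 1 + s := by linarith [hs.1]
      have hk := hkey lam hlam s ⟨hs.1.le, hs.2⟩
      calc (1-s)^ξ * (1+s)^ζ *
          |Real.exp (lam * spow s b - lam) - Real.exp ((s-1)*(b*lam))|
          ≤ (1-s)^ξ * (1+s)^ζ * (C * lam * (1-s)^2 * Real.exp (-(μ*(1-s)))) := by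
            apply mul_le_mul_of_nonneg_left _ (by positivity)
            exact hk
        _ = g s := by
            simp only [hg, hφ]
            rw [show (1-s)^ξ * (1+s)^ζ * (C * lam * (1-s)^2 * Real.exp (-(μ*(1-s))))
              = (C * lam * Real.exp (-(μ*(1-s))) * (1+s)^ζ) * ((1-s)^ξ * (1-s)^2) by ring,
              rpow_merge hξ h1]
            ring
  refine hmono.trans ?_
  -- split
  rw [← Ioc_union_Ioc_eq_Ioc (by norm_num : (-1:ℝ) ≤ 0) (by norm_num : (0:ℝ) ≤ 1),
    setIntegral_union (Ioc_disjoint_Ioc_of_le le_rfl) measurableSet_Ioc hgi1 hgi2]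
  have hpiece1 : (∫ s in Ioc (-1:ℝ) 0, g s) ≤ C * 2 ^ (ξ+2) * Bζ * lam * Real.exp (-μ) := by
    have hdom : IntegrableOn (fun s : ℝ => (C * lam * 2^(ξ+2) * Real.exp (-μ)) * (1+s)^ζ)
        (Ioc (-1:ℝ) 0) :=
      ((ψint.mono_set Ioc_subset_Icc_self).const_mul _)
    have := integral_mono_of_nonneg (μ := volume.restrict (Ioc (-1:ℝ) 0))
      (f := g) (g := fun s : ℝ => (C * lam * 2^(ξ+2) * Real.exp (-μ)) * (1+s)^ζ)
      ?_ hdom ?_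
    · refine this.trans ?_
      rw [integral_const_mul, ← hBζ]
      apply le_of_eq
      ring
    · filter_upwards [ae_restrict_mem measurableSet_Ioc] with s hs
      have h2 : (0:ℝ) ≤ 1 + s := by linarith [hs.1]
      have := Real.rpow_nonneg h2 ζ
      have := hφnonneg s (by linarith [hs.2])
      positivity
    · filter_upwards [ae_restrict_mem measurableSet_Ioc] with s hs
      have h1 : (0:ℝ) ≤ 1 + s := by linarith [hs.1]
      have hs2 : s ≤ 0 := hs.2
      apply mul_le_mul_of_nonneg_right _ (Real.rpow_nonneg h1 ζ)
      simp only [hφ]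
      have hb1 : (1-s) ^ (ξ+2) ≤ 2 ^ (ξ+2) :=
        Real.rpow_le_rpow (by linarith) (by linarith [hs.1]) (by linarith)
      have hb2 : Real.exp (-(μ*(1-s))) ≤ Real.exp (-μ) := by
        apply Real.exp_le_exp.2
        nlinarith
      have hstep1 : C*lam*(1-s)^(ξ+2) ≤ C*lam*(2:ℝ)^(ξ+2) :=
        mul_le_mul_of_nonneg_left hb1 (by positivity)
      have hstep2 : (0:ℝ) ≤ C*lam*(2:ℝ)^(ξ+2) := by positivity
      calc C*lam*(1-s)^(ξ+2)*Real.exp (-(μ*(1-s)))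
          ≤ C*lam*(2:ℝ)^(ξ+2)*Real.exp (-μ) :=
            mul_le_mul hstep1 hb2 (Real.exp_pos _).le hstep2
        _ = C * lam * 2^(ξ+2) * Real.exp (-μ) := by ring
  have hpiece2 : (∫ s in Ioc (0:ℝ) 1, g s) ≤ C * Mζ * cG * lam * μ ^ (-(ξ+3)) := by
    have hdom : IntegrableOn (fun s : ℝ => φ s * Mζ) (Ioc (0:ℝ) 1) := by
      apply IntegrableOn.mono_set _ Ioc_subset_Icc_self
      exact (hφcont.continuousOn.integrableOn_Icc).mul_const _
    have hstep := integral_mono_of_nonneg (μ := volume.restrict (Ioc (0:ℝ) 1))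
      (f := g) (g := fun s : ℝ => φ s * Mζ) ?_ hdom ?_
    · refine hstep.trans ?_
      rw [integral_mul_const]
      have hiv : (∫ s in Ioc (0:ℝ) 1, φ s)
          = C * lam * ∫ s in (0:ℝ)..1, (1-s)^(ξ+2) * Real.exp (-(μ*(1-s))) := by
        rw [← intervalIntegral.integral_of_le (by norm_num : (0:ℝ) ≤ 1),
          ← intervalIntegral.integral_const_mul]
        apply intervalIntegral.integral_congr
        intro s hs
        simp only [hφ]
        ring
      rw [hiv]
      have hcs : (∫ s in (0:ℝ)..1, (1-s)^(ξ+2) * Real.exp (-(μ*(1-s))))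
          = ∫ u in (0:ℝ)..1, u^(ξ+2) * Real.exp (-(μ*u)) := by
        have := intervalIntegral.integral_comp_sub_left
          (a := (0:ℝ)) (b := 1) (fun u => u^(ξ+2) * Real.exp (-(μ*u))) 1
        simpa using this
      rw [hcs]
      have := hsg μ hμ
      calc C * lam * (∫ u in (0:ℝ)..1, u^(ξ+2) * Real.exp (-(μ*u))) * Mζ
          ≤ C * lam * (cG * μ ^ (-(ξ+2+1))) * Mζ := by
            apply mul_le_mul_of_nonneg_right _ hMζ0.le
            exact mul_le_mul_of_nonneg_left this (by positivity)
        _ = C * Mζ * cG * lam * μ ^ (-(ξ+3)) := by ring_nf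
    · filter_upwards [ae_restrict_mem measurableSet_Ioc] with s hs
      have h2 : (0:ℝ) ≤ 1 + s := by linarith [hs.1]
      have := Real.rpow_nonneg h2 ζ
      have := hφnonneg s hs.2
      positivity
    · filter_upwards [ae_restrict_mem measurableSet_Ioc] with s hs
      apply mul_le_mul_of_nonneg_left _ (hφnonneg s hs.2)
      have h1 : (1:ℝ) ≤ 1 + s := by linarith [hs.1]
      rcases le_or_gt 0 ζ with h | h
      · exact le_trans (Real.rpow_le_rpow (by linarith) (by linarith [hs.2]) h) (le_max_right _ _)
      · exact le_trans (Real.rpow_le_one_of_one_le_of_nonpos h1 h.le) (le_max_left _ _)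
  calc (∫ s in Ioc (-1:ℝ) 0, g s) + (∫ s in Ioc (0:ℝ) 1, g s)
      ≤ C * 2 ^ (ξ+2) * Bζ * lam * Real.exp (-μ) + C * Mζ * cG * lam * μ ^ (-(ξ+3)) :=
        add_le_add hpiece1 hpiece2
    _ = C * 2 ^ (ξ+2) * Bζ * lam * Real.exp (-(a * lam)) +
        C * Mζ * cG * lam * (a * lam) ^ (-(ξ+3)) := by rw [hμdef]

lemma rpow_littleO {p q : ℝ} (h : p < q) :
    (fun x : ℝ => x ^ p) =o[atTop] fun x : ℝ => x ^ q := by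
  refine (isLittleO_iff_tendsto' ?_).2 ?_
  · filter_upwards [eventually_gt_atTop 0] with x hx hq
    exact absurd hq (Real.rpow_pos_of_pos hx q).ne'
  · apply Tendsto.congr' (f₁ := fun x : ℝ => x ^ (p - q))
    · filter_upwards [eventually_gt_atTop 0] with x hx
      rw [Real.rpow_sub hx]
    · have := tendsto_rpow_neg_atTop (y := q - p) (by linarith)
      simpa [neg_sub] using this

lemma exp_term_littleO {b a c1 ξ : ℝ} (hb : 0 < b) (ha : 0 < a) :
    (fun κ : ℝ => c1 * κ ^ b * Real.exp (-(a * κ ^ b))) =o[atTop]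
      fun κ : ℝ => κ ^ (-(b*(ξ+1))) := by
  refine (isLittleO_iff_tendsto' ?_).2 ?_
  · filter_upwards [eventually_gt_atTop 0] with x hx hq
    exact absurd hq (Real.rpow_pos_of_pos hx _).ne'
  · apply Tendsto.congr'
      (f₁ := fun κ : ℝ => c1 * ((κ ^ b) ^ (ξ+2) * Real.exp (-a * κ ^ b)))
    · filter_upwards [eventually_gt_atTop 0] with κ hκ
      rw [eq_div_iff (Real.rpow_pos_of_pos hκ _).ne']
      rw [← Real.rpow_mul hκ.le]
      rw [show Real.exp (-a * κ ^ b) = Real.exp (-(a * κ ^ b)) by ring_nf]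
      rw [show c1 * (κ ^ (b * (ξ+2)) * Real.exp (-(a * κ ^ b))) * κ ^ (-(b*(ξ+1)))
        = c1 * (κ ^ (b * (ξ+2)) * κ ^ (-(b*(ξ+1)))) * Real.exp (-(a * κ ^ b)) by ring,
        ← Real.rpow_add hκ, show b * (ξ+2) + -(b*(ξ+1)) = b by ring]
    · have h1 := (tendsto_rpow_mul_exp_neg_mul_atTop_nhds_zero (ξ+2) a ha).comp
        (tendsto_rpow_atTop hb)
      have h2 := h1.const_mul c1
      simpa using h2
lemma expb_hasDerivAt {b x : ℝ} (hb : 0 < b) (hx : 0 < x) :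
    HasDerivAt (fun z => Real.exp (spow z b)) (b * x ^ (b - 1) * Real.exp (x ^ b)) x := by
  have h1 : HasDerivAt (fun z : ℝ => Real.exp (z ^ b)) (b * x ^ (b - 1) * Real.exp (x ^ b)) x := by
    have := (Real.hasDerivAt_rpow_const (p := b) (Or.inl hx.ne')).exp
    convert this using 1; ring
  apply h1.congr_of_eventuallyEq
  filter_upwards [eventually_gt_nhds hx] with z hz
  rw [spow_nonneg_eq hb hz.le]

lemma expb_kphi {b x : ℝ} (hb : 0 < b) (hx : 0 < x) :
    x * phiF (fun z => Real.exp (spow z b)) x = b * x ^ b := by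
  rw [phiF, (expb_hasDerivAt hb hx).deriv, spow_nonneg_eq hb hx.le,
    mul_div_assoc, div_self (Real.exp_ne_zero _), mul_one]
  rw [show b - 1 = b + (-1) by ring, Real.rpow_add hx, Real.rpow_neg_one]
  field_simp
lemma main_littleO {b ξ ζ : ℝ} (hb : 0 < b) (hξ : -1 < ξ) (hζ : -1 < ζ) :
    (fun κ => ∫ s in (-1:ℝ)..1, (1 - s) ^ ξ * (1 + s) ^ ζ *
        |Real.exp (spow (κ * s) b - spow κ b) - Real.exp ((s - 1) * (b * spow κ b))|)
      =o[atTop] (fun κ : ℝ => κ ^ (-(b * (ξ + 1)))) := by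
  obtain ⟨c1, c2, hc1, hc2, hest⟩ := integral_est hb hξ hζ
  set a := min b 2⁻¹ with ha
  have ha0 : 0 < a := lt_min hb (by norm_num)
  set R : ℝ → ℝ := fun κ => c1 * κ ^ b * Real.exp (-(a * κ ^ b)) +
    (c2 * a ^ (-(ξ+3))) * κ ^ (-(b * (ξ+2))) with hR
  have hbig : (fun κ => ∫ s in (-1:ℝ)..1, (1 - s) ^ ξ * (1 + s) ^ ζ *
      |Real.exp (spow (κ * s) b - spow κ b) - Real.exp ((s - 1) * (b * spow κ b))|)
      =O[atTop] R := by
    rw [isBigO_iff]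
    refine ⟨1, ?_⟩
    filter_upwards [eventually_gt_atTop 0] with κ hκ
    have hlam : 0 < κ ^ b := Real.rpow_pos_of_pos hκ b
    have heq : (∫ s in (-1:ℝ)..1, (1 - s) ^ ξ * (1 + s) ^ ζ *
        |Real.exp (spow (κ * s) b - spow κ b) - Real.exp ((s - 1) * (b * spow κ b))|)
        = ∫ s in (-1:ℝ)..1, (1 - s) ^ ξ * (1 + s) ^ ζ *
        |Real.exp (κ ^ b * spow s b - κ ^ b) - Real.exp ((s - 1) * (b * κ ^ b))| := by
      apply intervalIntegral.integral_congr
      intro s _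
      simp only
      rw [spow_mul_of_pos hb hκ, spow_nonneg_eq hb hκ.le]
    have hnn : 0 ≤ ∫ s in (-1:ℝ)..1, (1 - s) ^ ξ * (1 + s) ^ ζ *
        |Real.exp (spow (κ * s) b - spow κ b) - Real.exp ((s - 1) * (b * spow κ b))| := by
      apply intervalIntegral.integral_nonneg (by norm_num : (-1:ℝ) ≤ 1)
      intro s hs
      have h1 : (0:ℝ) ≤ 1 - s := by linarith [hs.2]
      have h2 : (0:ℝ) ≤ 1 + s := by linarith [hs.1]
      have := Real.rpow_nonneg h1 ξ
      have := Real.rpow_nonneg h2 ζ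
      positivity
    have hRval : c1 * κ ^ b * Real.exp (-(a * κ ^ b)) +
        c2 * κ ^ b * (a * κ ^ b) ^ (-(ξ+3)) = R κ := by
      rw [hR]
      have h1 : (a * κ ^ b) ^ (-(ξ+3)) = a ^ (-(ξ+3)) * (κ ^ b) ^ (-(ξ+3)) :=
        Real.mul_rpow ha0.le hlam.le
      have h2 : (κ ^ b) ^ (-(ξ+3)) = κ ^ (b * (-(ξ+3))) := (Real.rpow_mul hκ.le _ _).symm
      have h3 : κ ^ b * κ ^ (b * (-(ξ+3))) = κ ^ (-(b * (ξ+2))) := by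
        rw [← Real.rpow_add hκ, show b + b * (-(ξ+3)) = -(b * (ξ+2)) by ring]
      rw [h1, h2, show c2 * κ ^ b * (a ^ (-(ξ+3)) * κ ^ (b * (-(ξ+3))))
        = c2 * a ^ (-(ξ+3)) * (κ ^ b * κ ^ (b * (-(ξ+3)))) by ring, h3]
    have hRnn : 0 ≤ R κ := by
      rw [← hRval]
      have := Real.rpow_nonneg (mul_pos ha0 hlam).le (-(ξ+3))
      positivity
    rw [Real.norm_eq_abs, Real.norm_eq_abs, abs_of_nonneg hnn, abs_of_nonneg hRnn, one_mul,
      heq, ← hRval]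
    exact hest (κ ^ b) hlam
  apply hbig.trans_isLittleO
  rw [hR]
  apply IsLittleO.add
  · exact exp_term_littleO hb ha0
  · apply IsLittleO.const_mul_left
    apply rpow_littleO
    nlinarith

/-- For any `b > 0`, the function `f_b(z) = exp(z^b)` belongs to the class `𝓕`;
in particular, since `κ φ_{f_b}(κ) = b κ^b`, the defining little-o condition takes
the explicit form given below. -/
theorem expb_memF (b : ℝ) (hb : 0 < b) :
    MemF (fun z => Real.exp (spow z b)) ∧
    ∀ ξ ζ : ℝ, -1 < ξ → -1 < ζ →
      (fun κ => ∫ s in (-1:ℝ)..1, (1 - s) ^ ξ * (1 + s) ^ ζ *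
          |Real.exp (spow (κ * s) b - spow κ b) - Real.exp ((s - 1) * (b * spow κ b))|)
        =o[atTop] (fun κ : ℝ => κ ^ (-(b * (ξ + 1)))) := by
  constructor
  · constructor
    · intro x; exact Real.exp_pos _
    · intro x hx y hy hxy
      apply Real.exp_le_exp.2
      have hy' : y ≤ 0 := hy
      rcases lt_or_eq_of_le hy' with h | h
      · rw [spow_neg_eq h, spow_neg_eq (lt_of_le_of_lt hxy h)]
        have habs : |y| ≤ |x| := by
          rw [abs_of_neg h, abs_of_neg (lt_of_le_of_lt hxy h)]
          linarith
        have := Real.rpow_le_rpow (abs_nonneg y) habs hb.le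
        linarith
      · subst h
        calc spow x b ≤ 0 := spow_nonpos hxy
          _ = spow 0 b := by simp [spow]
    · intro x hx y hy hxy
      apply Real.exp_lt_exp.2
      rw [spow_nonneg_eq hb hx, spow_nonneg_eq hb (le_trans hx hxy.le)]
      exact Real.rpow_lt_rpow hx hxy hb
    · exact ⟨1, one_pos, fun x hx =>
        (expb_hasDerivAt hb (lt_trans one_pos hx)).differentiableAt⟩
    · apply Tendsto.congr' _ ((tendsto_rpow_atTop hb).const_mul_atTop hb)
      filter_upwards [eventually_gt_atTop 0] with κ hκ
      exact (expb_kphi hb hκ).symm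
    · refine ⟨1, one_pos, fun x hx y hy hxy => ?_⟩
      have hx0 : (0:ℝ) < x := lt_trans one_pos hx
      have hy0 : (0:ℝ) < y := lt_trans one_pos hy
      simp only
      rw [expb_kphi hb hx0, expb_kphi hb hy0]
      exact mul_le_mul_of_nonneg_left (Real.rpow_le_rpow hx0.le hxy hb.le) hb.le
    · intro ξ ζ hξ hζ
      have hc : (b : ℝ) ^ (-(ξ+1)) ≠ 0 := (Real.rpow_pos_of_pos hb _).ne'
      have main := (main_littleO (ζ := ζ) hb hξ hζ).const_mul_right hc
      apply main.congr'
      · filter_upwards [eventually_gt_atTop 0] with κ hκ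
        apply intervalIntegral.integral_congr
        intro s _
        simp only
        have h1 : Real.exp (spow (κ*s) b) / Real.exp (spow κ b)
            = Real.exp (spow (κ*s) b - spow κ b) := (Real.exp_sub _ _).symm
        rw [h1]
        rw [expb_kphi hb hκ]
        rw [spow_nonneg_eq hb hκ.le]
      · filter_upwards [eventually_gt_atTop 0] with κ hκ
        have hκb : (0:ℝ) < κ ^ b := Real.rpow_pos_of_pos hκ b
        rw [expb_kphi hb hκ, Real.mul_rpow hb.le hκb.le, ← Real.rpow_mul hκ.le,
          show b * (-(ξ+1)) = -(b*(ξ+1)) by ring]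
  · intro ξ ζ hξ hζ
    exact main_littleO hb hξ hζ
end

section
/- Fix an integer p ≥ 2 and f ∈ 𝓕, and let (κ_n) be a positive real sequence diverging to ∞. Then κ_n φ_f(κ_n) · (1 − e₂(κ_n)) → p − 1 as n → ∞; equivalently, 1 − e₂(κ_n) = (p−1)/(κ_nφ_f(κ_n)) + o(1/(κ_nφ_f(κ_n))). -/
open MeasureTheory Filter Asymptotics Real Set

/-- The normalizing integral `∫_{-1}^1 (1-s²)^{(p-3)/2} f(κ s) ds`. -/
noncomputable def I0 (p : ℕ) (f : ℝ → ℝ) (κ : ℝ) : ℝ :=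
  ∫ s in (-1:ℝ)..1, (1 - s ^ 2) ^ (((p:ℝ) - 3) / 2) * f (κ * s)

/-- The `ℓ`-th moment `e_ℓ(κ)` of the latitude cosine under `Rot_p(θ, κ, f)`. -/
noncomputable def eMom (p : ℕ) (f : ℝ → ℝ) (ℓ : ℕ) (κ : ℝ) : ℝ :=
  (∫ s in (-1:ℝ)..1, s ^ ℓ * (1 - s ^ 2) ^ (((p:ℝ) - 3) / 2) * f (κ * s)) / I0 p f κ

/-- The variance `ẽ₂(κ) = e₂(κ) - e₁(κ)²`. -/
noncomputable def eTilde2 (p : ℕ) (f : ℝ → ℝ) (κ : ℝ) : ℝ :=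
  eMom p f 2 κ - (eMom p f 1 κ) ^ 2


lemma wgt_meas (γ : ℝ) : Measurable (fun s : ℝ => (1 - s) ^ γ * (1 + s) ^ γ) := by
  have h1 : Measurable fun s : ℝ => 1 - s := measurable_const.sub measurable_id
  have h2 : Measurable fun s : ℝ => 1 + s := measurable_const.add measurable_id
  exact (h1.pow measurable_const).mul (h2.pow measurable_const)

lemma wgt_nonneg (γ : ℝ) {s : ℝ} (h1 : -1 ≤ s) (h2 : s ≤ 1) :
    0 ≤ (1 - s) ^ γ * (1 + s) ^ γ :=
  mul_nonneg (Real.rpow_nonneg (by linarith) _) (Real.rpow_nonneg (by linarith) _)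

lemma wgt_intervalIntegrable (γ : ℝ) (hγ : -1 < γ) :
    IntervalIntegrable (fun s : ℝ => (1 - s) ^ γ * (1 + s) ^ γ) volume (-1) 1 := by
  have base : IntervalIntegrable (fun x : ℝ => x ^ γ) volume 0 1 :=
    intervalIntegral.intervalIntegrable_rpow' hγ
  have h1 : IntervalIntegrable (fun s : ℝ => (1 + s) ^ γ) volume (-1) 0 := by
    have := base.comp_add_right 1
    norm_num at this
    simpa [add_comm] using this
  have h2 : IntervalIntegrable (fun s : ℝ => (1 - s) ^ γ) volume 0 1 := by
    have := base.comp_sub_left 1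
    norm_num at this
    exact this.symm
  have c1 : ContinuousOn (fun s : ℝ => (1 - s) ^ γ) (Set.uIcc (-1:ℝ) 0) := by
    apply ContinuousOn.rpow_const (by fun_prop)
    intro x hx
    rw [uIcc_of_le (by norm_num)] at hx
    exact Or.inl (by nlinarith [hx.2])
  have c2 : ContinuousOn (fun s : ℝ => (1 + s) ^ γ) (Set.uIcc (0:ℝ) 1) := by
    apply ContinuousOn.rpow_const (by fun_prop)
    intro x hx
    rw [uIcc_of_le (by norm_num)] at hx
    exact Or.inl (by nlinarith [hx.1])
  exact (h1.continuousOn_mul c1).trans (h2.mul_continuousOn c2)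

lemma wgt_mul_intervalIntegrable (γ : ℝ) (hγ : -1 < γ)
    {g : ℝ → ℝ} (hm : AEStronglyMeasurable g (volume.restrict (Set.Ioc (-1:ℝ) 1)))
    (hb : ∀ s ∈ Set.Ioc (-1:ℝ) 1, |g s| ≤ 1) :
    IntervalIntegrable (fun s : ℝ => (1 - s) ^ γ * (1 + s) ^ γ * g s) volume (-1) 1 := by
  have hW := wgt_intervalIntegrable γ hγ
  rw [intervalIntegrable_iff_integrableOn_Ioc_of_le (by norm_num)] at hW ⊢
  apply hW.mono' (((wgt_meas γ).aestronglyMeasurable).mul hm)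
  rw [ae_restrict_iff' measurableSet_Ioc]
  filter_upwards with s hs
  have h0 := wgt_nonneg γ (le_of_lt hs.1) hs.2
  have habs : |(1 - s) ^ γ * (1 + s) ^ γ * g s| = ((1 - s) ^ γ * (1 + s) ^ γ) * |g s| := by
    rw [abs_mul, abs_of_nonneg h0]
  show ‖(1 - s) ^ γ * (1 + s) ^ γ * g s‖ ≤ (1 - s) ^ γ * (1 + s) ^ γ
  rw [Real.norm_eq_abs, habs]
  calc ((1 - s) ^ γ * (1 + s) ^ γ) * |g s| ≤ ((1 - s) ^ γ * (1 + s) ^ γ) * 1 :=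
        mul_le_mul_of_nonneg_left (hb s hs) h0
    _ = (1 - s) ^ γ * (1 + s) ^ γ := mul_one _

lemma watson (γ : ℝ) (hγ : -1 < γ) :
    Tendsto (fun t : ℝ => t ^ (γ+1) *
        ∫ s in (-1:ℝ)..1, (1 - s) ^ γ * (1 + s) ^ γ * Real.exp ((s-1)*t))
      atTop (nhds (2 ^ γ * Real.Gamma (γ+1))) := by
  -- the rescaled tail integrand
  set F : ℝ → ℝ → ℝ := fun t u =>
    (Set.Ioc (0:ℝ) t).indicator (fun u => u ^ γ * (2 - u/t) ^ γ * Real.exp (-u)) u with hF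
  set C : ℝ := max 1 ((2:ℝ) ^ γ) with hC
  have hC0 : (0:ℝ) ≤ C := le_trans zero_le_one (le_max_left _ _)
  -- Step 1 : dominated convergence for the rescaled integral
  have hDCT : Tendsto (fun t => ∫ u in Set.Ioi (0:ℝ), F t u) atTop
      (nhds (2 ^ γ * Real.Gamma (γ+1))) := by
    have hγ1 : (0:ℝ) < γ + 1 := by linarith
    have hlim_eq : (2:ℝ) ^ γ * Real.Gamma (γ+1)
        = ∫ u in Set.Ioi (0:ℝ), u ^ γ * (2:ℝ) ^ γ * Real.exp (-u) := by
      rw [Real.Gamma_eq_integral hγ1]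
      rw [← integral_const_mul]
      congr 1
      funext u
      rw [add_sub_cancel_right]
      ring
    rw [hlim_eq]
    apply tendsto_integral_filter_of_dominated_convergence
      (bound := fun u => C * (Real.exp (-u) * u ^ γ))
    · -- measurability
      filter_upwards with t
      apply (Measurable.indicator _ measurableSet_Ioc).aestronglyMeasurable
      exact ((measurable_id.pow measurable_const).mul
        ((measurable_const.sub (measurable_id.div_const t)).pow measurable_const)).mul
        (Real.measurable_exp.comp measurable_neg)
    · -- bound
      filter_upwards with t
      filter_upwards [self_mem_ae_restrict (measurableSet_Ioi : MeasurableSet (Set.Ioi (0:ℝ)))]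
        with u hu
      by_cases hmem : u ∈ Set.Ioc (0:ℝ) t
      · rw [hF]
        simp only [indicator_of_mem hmem]
        have hu0 : (0:ℝ) < u := hmem.1
        have ht0 : (0:ℝ) < t := lt_of_lt_of_le hu0 hmem.2
        have hdiv1 : u / t ≤ 1 := (div_le_one ht0).mpr hmem.2
        have hdiv0 : 0 < u / t := div_pos hu0 ht0
        have hbase1 : (1:ℝ) ≤ 2 - u/t := by linarith
        have hbC : (2 - u/t) ^ γ ≤ C := by
          rcases le_or_gt 0 γ with h | h
          · exact le_trans (Real.rpow_le_rpow (by linarith) (by linarith) h) (le_max_right _ _)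
          · exact le_trans (Real.rpow_le_one_of_one_le_of_nonpos hbase1 h.le) (le_max_left _ _)
        have h1 : 0 ≤ u ^ γ := Real.rpow_nonneg hu0.le _
        have h2 : 0 ≤ (2 - u/t) ^ γ := Real.rpow_nonneg (by linarith) _
        have h3 : (0:ℝ) < Real.exp (-u) := Real.exp_pos _
        rw [Real.norm_eq_abs, abs_of_nonneg (by positivity)]
        calc u ^ γ * (2 - u/t) ^ γ * Real.exp (-u)
            ≤ u ^ γ * C * Real.exp (-u) := by
              apply mul_le_mul_of_nonneg_right _ h3.le
              exact mul_le_mul_of_nonneg_left hbC h1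
          _ = C * (Real.exp (-u) * u ^ γ) := by ring
      · rw [hF]
        simp only [indicator_of_notMem hmem]
        rw [norm_zero]
        have : 0 ≤ u ^ γ := Real.rpow_nonneg (le_of_lt hu) _
        positivity
    · -- bound integrable
      have := (Real.GammaIntegral_convergent (by linarith : (0:ℝ) < γ + 1)).const_mul C
      simpa [add_sub_cancel_right] using this
    · -- pointwise limit
      filter_upwards [self_mem_ae_restrict (measurableSet_Ioi : MeasurableSet (Set.Ioi (0:ℝ)))]
        with u hu
      have hu0 : (0:ℝ) < u := hu
      have heq : (fun t : ℝ => u ^ γ * (2 - u/t) ^ γ * Real.exp (-u)) =ᶠ[atTop]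
          fun t => F t u := by
        filter_upwards [eventually_ge_atTop u] with t ht
        rw [hF]
        simp only [indicator_of_mem (Set.mem_Ioc.mpr ⟨hu0, ht⟩)]
      apply Tendsto.congr' heq
      have hdiv : Tendsto (fun t : ℝ => u / t) atTop (nhds 0) :=
        tendsto_const_nhds.div_atTop tendsto_id
      have hsub : Tendsto (fun t : ℝ => 2 - u / t) atTop (nhds 2) := by
        simpa using tendsto_const_nhds.sub hdiv
      have hpow : Tendsto (fun t : ℝ => (2 - u / t) ^ γ) atTop (nhds ((2:ℝ) ^ γ)) :=
        hsub.rpow_const (Or.inl two_ne_zero)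
      exact (tendsto_const_nhds.mul hpow).mul tendsto_const_nhds
  -- integrability of the full integrand for t ≥ 0
  have hWeInt : ∀ t : ℝ, 0 ≤ t → IntervalIntegrable
      (fun s : ℝ => (1 - s) ^ γ * (1 + s) ^ γ * Real.exp ((s-1)*t)) volume (-1) 1 := by
    intro t ht
    apply wgt_mul_intervalIntegrable γ hγ
    · exact Continuous.aestronglyMeasurable (by fun_prop)
    · intro s hs
      rw [abs_of_pos (Real.exp_pos _)]
      rw [Real.exp_le_one_iff]
      exact mul_nonpos_of_nonpos_of_nonneg (by linarith [hs.2]) ht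
  have hsub1 : Set.uIcc (-1:ℝ) 0 ⊆ Set.uIcc (-1:ℝ) 1 := by
    rw [uIcc_of_le (by norm_num : (-1:ℝ) ≤ 0), uIcc_of_le (by norm_num : (-1:ℝ) ≤ 1)]
    exact Set.Icc_subset_Icc le_rfl zero_le_one
  have hsub2 : Set.uIcc (0:ℝ) 1 ⊆ Set.uIcc (-1:ℝ) 1 := by
    rw [uIcc_of_le zero_le_one, uIcc_of_le (by norm_num : (-1:ℝ) ≤ 1)]
    exact Set.Icc_subset_Icc (by norm_num) le_rfl
  have hW10 : IntervalIntegrable (fun s : ℝ => (1 - s) ^ γ * (1 + s) ^ γ) volume (-1) 0 :=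
    (wgt_intervalIntegrable γ hγ).mono_set hsub1
  -- Step 2 : the left part tends to 0
  have hpart1 : Tendsto (fun t : ℝ => t ^ (γ+1) *
      ∫ s in (-1:ℝ)..0, (1 - s) ^ γ * (1 + s) ^ γ * Real.exp ((s-1)*t)) atTop (nhds 0) := by
    set C₁ : ℝ := ∫ s in (-1:ℝ)..0, (1 - s) ^ γ * (1 + s) ^ γ with hC₁
    apply squeeze_zero' (g := fun t : ℝ => C₁ * (t ^ (γ+1) * Real.exp (-(1*t))))
    · filter_upwards [eventually_ge_atTop (0:ℝ)] with t ht
      apply mul_nonneg (Real.rpow_nonneg ht _)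
      apply intervalIntegral.integral_nonneg (by norm_num : (-1:ℝ) ≤ 0)
      intro s hs
      exact mul_nonneg (wgt_nonneg γ hs.1 (le_trans hs.2 zero_le_one)) (Real.exp_pos _).le
    · filter_upwards [eventually_ge_atTop (0:ℝ)] with t ht
      have hIl : IntervalIntegrable
          (fun s : ℝ => (1 - s) ^ γ * (1 + s) ^ γ * Real.exp ((s-1)*t)) volume (-1) 0 :=
        (hWeInt t ht).mono_set hsub1
      have hIr : IntervalIntegrable
          (fun s : ℝ => (1 - s) ^ γ * (1 + s) ^ γ * Real.exp (-t)) volume (-1) 0 :=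
        hW10.mul_const _
      have hmono : (∫ s in (-1:ℝ)..0, (1 - s) ^ γ * (1 + s) ^ γ * Real.exp ((s-1)*t))
          ≤ ∫ s in (-1:ℝ)..0, (1 - s) ^ γ * (1 + s) ^ γ * Real.exp (-t) := by
        apply intervalIntegral.integral_mono_on (by norm_num : (-1:ℝ) ≤ 0) hIl hIr
        intro s hs
        apply mul_le_mul_of_nonneg_left _ (wgt_nonneg γ hs.1 (le_trans hs.2 zero_le_one))
        apply Real.exp_le_exp.mpr
        nlinarith [hs.2]
      have hmul : (∫ s in (-1:ℝ)..0, (1 - s) ^ γ * (1 + s) ^ γ * Real.exp (-t))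
          = C₁ * Real.exp (-t) := by
        rw [hC₁, ← intervalIntegral.integral_mul_const]
      calc t ^ (γ+1) * ∫ s in (-1:ℝ)..0, (1 - s) ^ γ * (1 + s) ^ γ * Real.exp ((s-1)*t)
          ≤ t ^ (γ+1) * (C₁ * Real.exp (-t)) := by
            apply mul_le_mul_of_nonneg_left _ (Real.rpow_nonneg ht _)
            rw [← hmul]; exact hmono
        _ = C₁ * (t ^ (γ+1) * Real.exp (-(1*t))) := by rw [one_mul]; ring
    · have h0 := (tendsto_rpow_mul_exp_neg_mul_atTop_nhds_zero (γ+1) 1 one_pos).const_mul C₁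
      simpa using h0
  -- Step 3 : the key identity for t > 0
  have key : ∀ t : ℝ, 0 < t →
      t ^ (γ+1) * ∫ s in (-1:ℝ)..1, (1 - s) ^ γ * (1 + s) ^ γ * Real.exp ((s-1)*t)
      = t ^ (γ+1) * (∫ s in (-1:ℝ)..0, (1 - s) ^ γ * (1 + s) ^ γ * Real.exp ((s-1)*t))
        + ∫ u in Set.Ioi (0:ℝ), F t u := by
    intro t ht
    have hIl : IntervalIntegrable
        (fun s : ℝ => (1 - s) ^ γ * (1 + s) ^ γ * Real.exp ((s-1)*t)) volume (-1) 0 :=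
      (hWeInt t ht.le).mono_set hsub1
    have hIr : IntervalIntegrable
        (fun s : ℝ => (1 - s) ^ γ * (1 + s) ^ γ * Real.exp ((s-1)*t)) volume 0 1 :=
      (hWeInt t ht.le).mono_set hsub2
    have hsplit := intervalIntegral.integral_add_adjacent_intervals hIl hIr
    rw [← hsplit, mul_add]
    congr 1
    -- now : t^(γ+1) * ∫_0^1 = ∫_{Ioi 0} F t
    set h : ℝ → ℝ := fun v => v ^ γ * (2 - v) ^ γ * Real.exp (-(v*t)) with hh
    have e1 : (∫ s in (0:ℝ)..1, (1 - s) ^ γ * (1 + s) ^ γ * Real.exp ((s-1)*t))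
        = ∫ v in (0:ℝ)..1, h v := by
      have : (∫ s in (0:ℝ)..1, (1 - s) ^ γ * (1 + s) ^ γ * Real.exp ((s-1)*t))
          = ∫ s in (0:ℝ)..1, h (1 - s) := by
        apply intervalIntegral.integral_congr
        intro s _
        rw [hh]
        simp only
        rw [show (2 - (1-s)) = 1 + s by ring, show (-((1-s)*t)) = (s-1)*t by ring]
      rw [this]
      rw [intervalIntegral.integral_comp_sub_left h 1]
      norm_num
    have e2 : (∫ v in (0:ℝ)..1, h v) = t⁻¹ * ∫ u in (0:ℝ)..t, h (u/t) := by
      have h2 := intervalIntegral.integral_comp_div (a := 0) (b := t) (f := h) (ne_of_gt ht)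
      rw [h2, zero_div, div_self (ne_of_gt ht), smul_eq_mul]
      field_simp
    have e3 : (∫ u in (0:ℝ)..t, h (u/t))
        = (t ^ γ)⁻¹ * ∫ u in (0:ℝ)..t, u ^ γ * (2 - u/t) ^ γ * Real.exp (-u) := by
      rw [← intervalIntegral.integral_const_mul]
      apply intervalIntegral.integral_congr
      intro u hu
      rw [uIcc_of_le ht.le] at hu
      rw [hh]
      simp only
      rw [Real.div_rpow hu.1 ht.le, div_mul_cancel₀ _ (ne_of_gt ht), div_eq_mul_inv]
      ring
    have e4 : (∫ u in (0:ℝ)..t, u ^ γ * (2 - u/t) ^ γ * Real.exp (-u))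
        = ∫ u in Set.Ioi (0:ℝ), F t u := by
      rw [intervalIntegral.integral_of_le ht.le, hF]
      rw [integral_indicator measurableSet_Ioc]
      rw [Measure.restrict_restrict measurableSet_Ioc]
      rw [inter_eq_left.mpr Set.Ioc_subset_Ioi_self]
    rw [e1, e2, e3, e4]
    have htγ : (t : ℝ) ^ γ ≠ 0 := (Real.rpow_pos_of_pos ht γ).ne'
    rw [Real.rpow_add_one (ne_of_gt ht)]
    field_simp
  -- Step 4 : assembly
  have hfinal := hpart1.add hDCT
  rw [zero_add] at hfinal
  apply Tendsto.congr' _ hfinal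
  filter_upwards [eventually_gt_atTop (0:ℝ)] with t ht
  exact (key t ht).symm

lemma MemF.mono {f : ℝ → ℝ} (hf : MemF f) : Monotone f := by
  intro x y hxy
  rcases le_total y 0 with hy | hy
  · exact hf.monoNonpos (le_trans hxy hy) hy hxy
  rcases le_total x 0 with hx | hx
  · exact le_trans (hf.monoNonpos hx (le_refl (0:ℝ)) hx)
      (hf.strictMonoNonneg.monotoneOn (le_refl (0:ℝ)) hy hy)
  · exact hf.strictMonoNonneg.monotoneOn hx (le_trans hx hxy) hxy

/-- The latitude-density ratio `f(κ s)/f(κ)`, measurable and bounded by 1 on `(-1,1]`. -/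
lemma ratio_aesm {f : ℝ → ℝ} (hf : MemF f) (c : ℝ) :
    AEStronglyMeasurable (fun s : ℝ => f (c * s) / f c)
      (volume.restrict (Set.Ioc (-1:ℝ) 1)) :=
  (((hf.mono.measurable).comp (measurable_const.mul measurable_id)).div_const _).aestronglyMeasurable

lemma ratio_bound {f : ℝ → ℝ} (hf : MemF f) {c : ℝ} (hc : 0 < c) :
    ∀ s ∈ Set.Ioc (-1:ℝ) 1, |f (c * s) / f c| ≤ 1 := by
  intro s hs
  rw [abs_of_pos (div_pos (hf.pos _) (hf.pos _)), div_le_one (hf.pos _)]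
  exact hf.mono (by nlinarith [hs.2])

lemma ratio_pos {f : ℝ → ℝ} (hf : MemF f) (c s : ℝ) : 0 < f (c * s) / f c :=
  div_pos (hf.pos _) (hf.pos _)

lemma momA {f : ℝ → ℝ} (hf : MemF f) (γ : ℝ) (hγ : -1 < γ)
    (κ : ℕ → ℝ) (hκpos : ∀ n, 0 < κ n) (hκtop : Tendsto κ atTop atTop) :
    Tendsto (fun n => (κ n * phiF f (κ n)) ^ (γ+1) *
        ∫ s in (-1:ℝ)..1, (1 - s) ^ γ * (1 + s) ^ γ * (f (κ n * s) / f (κ n)))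
      atTop (nhds (2 ^ γ * Real.Gamma (γ+1))) := by
  set T : ℕ → ℝ := fun n => κ n * phiF f (κ n) with hTdef
  have hT : Tendsto T atTop atTop := hf.tendsto_top.comp hκtop
  -- the Laplace-approximation part
  have hG : Tendsto (fun n => T n ^ (γ+1) *
      ∫ s in (-1:ℝ)..1, (1 - s) ^ γ * (1 + s) ^ γ * Real.exp ((s-1) * T n))
      atTop (nhds (2 ^ γ * Real.Gamma (γ+1))) := (watson γ hγ).comp hT
  -- the error part
  have hO := (hf.littleO γ γ hγ hγ).comp_tendsto hκtop
  have hDiv := hO.tendsto_div_nhds_zero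
  have hErr : Tendsto (fun n => T n ^ (γ+1) *
      ((∫ s in (-1:ℝ)..1, (1 - s) ^ γ * (1 + s) ^ γ * (f (κ n * s) / f (κ n)))
        - ∫ s in (-1:ℝ)..1, (1 - s) ^ γ * (1 + s) ^ γ * Real.exp ((s-1) * T n)))
      atTop (nhds 0) := by
    apply squeeze_zero_norm' _ hDiv
    filter_upwards [hT.eventually_gt_atTop 0] with n ht
    have hA : IntervalIntegrable
        (fun s : ℝ => (1 - s) ^ γ * (1 + s) ^ γ * (f (κ n * s) / f (κ n))) volume (-1) 1 :=
      wgt_mul_intervalIntegrable γ hγ (ratio_aesm hf _) (ratio_bound hf (hκpos n))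
    have hGint : IntervalIntegrable
        (fun s : ℝ => (1 - s) ^ γ * (1 + s) ^ γ * Real.exp ((s-1) * T n)) volume (-1) 1 := by
      apply wgt_mul_intervalIntegrable γ hγ (Continuous.aestronglyMeasurable (by fun_prop))
      intro s hs
      rw [abs_of_pos (Real.exp_pos _), Real.exp_le_one_iff]
      exact mul_nonpos_of_nonpos_of_nonneg (by linarith [hs.2]) ht.le
    have hsub := (intervalIntegral.integral_sub hA hGint).symm
    have habs : |∫ s in (-1:ℝ)..1,
          ((1 - s) ^ γ * (1 + s) ^ γ * (f (κ n * s) / f (κ n))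
            - (1 - s) ^ γ * (1 + s) ^ γ * Real.exp ((s-1) * T n))|
        ≤ ∫ s in (-1:ℝ)..1, (1 - s) ^ γ * (1 + s) ^ γ *
            |f (κ n * s) / f (κ n) - Real.exp ((s - 1) * T n)| := by
      refine le_trans (intervalIntegral.abs_integral_le_integral_abs (by norm_num)) (le_of_eq ?_)
      apply intervalIntegral.integral_congr
      intro s hs
      rw [uIcc_of_le (by norm_num : (-1:ℝ) ≤ 1)] at hs
      dsimp only
      rw [← mul_sub, abs_mul, abs_of_nonneg (wgt_nonneg γ hs.1 hs.2)]
    rw [Real.norm_eq_abs, abs_mul, abs_of_nonneg (Real.rpow_nonneg ht.le _), hsub]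
    calc T n ^ (γ+1) * |_| ≤ T n ^ (γ+1) *
          ∫ s in (-1:ℝ)..1, (1 - s) ^ γ * (1 + s) ^ γ *
            |f (κ n * s) / f (κ n) - Real.exp ((s - 1) * T n)| :=
        mul_le_mul_of_nonneg_left habs (Real.rpow_nonneg ht.le _)
      _ = (∫ s in (-1:ℝ)..1, (1 - s) ^ γ * (1 + s) ^ γ *
            |f (κ n * s) / f (κ n) - Real.exp ((s - 1) * T n)|) / T n ^ (-(γ+1)) := by
          rw [Real.rpow_neg ht.le, div_eq_mul_inv, inv_inv, mul_comm]
      _ = _ := rfl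
  have := hErr.add hG
  rw [zero_add] at this
  apply Tendsto.congr _ this
  intro n
  ring


set_option maxHeartbeats 2000000 in
/-- Theorem 2.2(i): `1 - e₂(κ_n) = (p-1)/(κ_n φ_f(κ_n)) + o(1/(κ_n φ_f(κ_n)))`. -/
theorem one_sub_e2_expansion
    (p : ℕ) (hp : 2 ≤ p) (f : ℝ → ℝ) (hf : MemF f)
    (κ : ℕ → ℝ) (hκpos : ∀ n, 0 < κ n) (hκtop : Tendsto κ atTop atTop) :
    Tendsto (fun n => κ n * phiF f (κ n) * (1 - eMom p f 2 (κ n)))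
      atTop (nhds ((p:ℝ) - 1)) := by
  have h2R : (2:ℝ) ≤ (p:ℝ) := by exact_mod_cast hp
  set α : ℝ := ((p:ℝ) - 3) / 2 with hαdef
  have hα : -1 < α := by rw [hαdef]; linarith
  have hα1 : -1 < α + 1 := by linarith
  have h0α1 : 0 < α + 1 := by rw [hαdef]; linarith
  have hpow : ∀ x : ℝ, 0 ≤ x → x ^ (α+1) = x ^ α * x := by
    intro x hx
    rcases eq_or_lt_of_le hx with h | h
    · rw [← h, Real.zero_rpow (ne_of_gt h0α1), mul_zero]
    · exact Real.rpow_add_one (ne_of_gt h) α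
  set T : ℕ → ℝ := fun n => κ n * phiF f (κ n) with hTdef
  have hT : Tendsto T atTop atTop := hf.tendsto_top.comp hκtop
  set A : ℝ → ℕ → ℝ := fun γ n =>
    ∫ s in (-1:ℝ)..1, (1-s)^γ*(1+s)^γ*(f (κ n * s)/f (κ n)) with hAdef
  have hNum := momA hf (α+1) hα1 κ hκpos hκtop
  have hDen := momA hf α hα κ hκpos hκtop
  have hΓpos : 0 < Real.Gamma (α+1) := Real.Gamma_pos_of_pos h0α1
  have h2pos : (0:ℝ) < 2 ^ α := Real.rpow_pos_of_pos two_pos α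
  have hDenNe : (2:ℝ)^α * Real.Gamma (α+1) ≠ 0 := by positivity
  have hQuot := hNum.div hDen hDenNe
  have hvv : (2:ℝ) ^ (α+1) * Real.Gamma ((α+1)+1) / ((2:ℝ) ^ α * Real.Gamma (α+1))
      = (p:ℝ) - 1 := by
    rw [Real.Gamma_add_one (ne_of_gt h0α1), Real.rpow_add_one two_ne_zero]
    field_simp
    rw [hαdef]
    ring
  rw [hvv] at hQuot
  apply Tendsto.congr' _ hQuot
  filter_upwards [hT.eventually_gt_atTop 0] with n hTn
  have hc : 0 < κ n := hκpos n
  have hfc : 0 < f (κ n) := hf.pos _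
  have hIα : IntervalIntegrable
      (fun s : ℝ => (1-s)^α*(1+s)^α*(f (κ n * s)/f (κ n))) volume (-1) 1 :=
    wgt_mul_intervalIntegrable α hα (ratio_aesm hf _) (ratio_bound hf hc)
  have hIs : IntervalIntegrable
      (fun s : ℝ => (1-s)^α*(1+s)^α*(s^2*(f (κ n * s)/f (κ n)))) volume (-1) 1 := by
    apply wgt_mul_intervalIntegrable α hα
    · exact ((measurable_id.pow measurable_const).mul
        (((hf.mono.measurable).comp (measurable_const.mul measurable_id)).div_const
          _)).aestronglyMeasurable
    · intro s hs
      rw [abs_mul]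
      have h1 : |s ^ 2| ≤ 1 := by
        rw [abs_of_nonneg (sq_nonneg s)]
        nlinarith [hs.1, hs.2]
      have h2 := ratio_bound hf hc s hs
      nlinarith [abs_nonneg (s^2), abs_nonneg (f (κ n * s) / f (κ n))]
  have hApos : 0 < A α n := by
    apply intervalIntegral.intervalIntegral_pos_of_pos_on hIα _ (by norm_num)
    intro s hs
    exact mul_pos (mul_pos (Real.rpow_pos_of_pos (by linarith [hs.2]) _)
      (Real.rpow_pos_of_pos (by linarith [hs.1]) _)) (ratio_pos hf _ _)
  have hI0 : I0 p f (κ n) = f (κ n) * A α n := by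
    rw [I0, ← hαdef, hAdef]
    rw [← intervalIntegral.integral_const_mul]
    apply intervalIntegral.integral_congr
    intro s hs
    rw [uIcc_of_le (by norm_num : (-1:ℝ) ≤ 1)] at hs
    have h1 : (0:ℝ) ≤ 1 - s := by linarith [hs.2]
    have h2 : (0:ℝ) ≤ 1 + s := by linarith [hs.1]
    dsimp only
    rw [show (1 - s^2 : ℝ) = (1-s)*(1+s) by ring, Real.mul_rpow h1 h2]
    field_simp
  have hN2 : (∫ s in (-1:ℝ)..1, s ^ 2 * (1 - s ^ 2) ^ α * f (κ n * s))
      = f (κ n) * ∫ s in (-1:ℝ)..1, (1-s)^α*(1+s)^α*(s^2*(f (κ n * s)/f (κ n))) := by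
    rw [← intervalIntegral.integral_const_mul]
    apply intervalIntegral.integral_congr
    intro s hs
    rw [uIcc_of_le (by norm_num : (-1:ℝ) ≤ 1)] at hs
    have h1 : (0:ℝ) ≤ 1 - s := by linarith [hs.2]
    have h2 : (0:ℝ) ≤ 1 + s := by linarith [hs.1]
    dsimp only
    rw [show (1 - s^2 : ℝ) = (1-s)*(1+s) by ring, Real.mul_rpow h1 h2]
    field_simp
  have hsplitA : A (α+1) n
      = A α n - ∫ s in (-1:ℝ)..1, (1-s)^α*(1+s)^α*(s^2*(f (κ n * s)/f (κ n))) := by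
    rw [hAdef, ← intervalIntegral.integral_sub hIα hIs]
    apply intervalIntegral.integral_congr
    intro s hs
    rw [uIcc_of_le (by norm_num : (-1:ℝ) ≤ 1)] at hs
    have h1 : (0:ℝ) ≤ 1 - s := by linarith [hs.2]
    have h2 : (0:ℝ) ≤ 1 + s := by linarith [hs.1]
    dsimp only
    rw [hpow _ h1, hpow _ h2]
    ring
  have h1e : 1 - eMom p f 2 (κ n) = A (α+1) n / A α n := by
    rw [eMom, ← hαdef, hI0, hN2, hsplitA]
    field_simp
    ring_nf
    congr 1
    apply intervalIntegral.integral_congr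
    intro s _
    dsimp only
    rw [mul_comm s (κ n)]
    ring
  rw [h1e]
  simp only [Pi.div_apply, hAdef]
  have hTn' : (0:ℝ) < κ n * phiF f (κ n) := hTn
  have hTα : (κ n * phiF f (κ n)) ^ (α+1) ≠ 0 := (Real.rpow_pos_of_pos hTn' _).ne'
  have hAne : (∫ s in (-1:ℝ)..1, (1-s)^α*(1+s)^α*(f (κ n * s)/f (κ n))) ≠ 0 :=
    ne_of_gt hApos
  rw [show (κ n * phiF f (κ n)) ^ (α+1+1)
      = (κ n * phiF f (κ n)) ^ (α+1) * (κ n * phiF f (κ n)) from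
    Real.rpow_add_one (ne_of_gt hTn') _]
  rw [mul_assoc, mul_div_mul_left _ _ hTα, mul_div_assoc]
end
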